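/- arXiv:1812.00437 — 6 statements merged into one kernel-verified Lean document; each statement's English description precedes it below -/
import Mathlib

section
/- Let m₁ and m₂ be relatively prime natural numbers with m₁+m₂ odd. Then the rhodonea curve ρ^{(m)}_α has minimal period 2π, and for t ∈ [0,2π) the set S^{(m)}(t) = {s ∈ [0,2π) : ρ^{(m)}_α(s) = ρ^{(m)}_α(t)} satisfies: (i) #S^{(m)}(t) = 2m₂ if t = t^{(m)}_l for some l ∈ {0,…,4m₁m₂−1} with l ≡ m₁ (mod 2m₁); (ii) #S^{(m)}(t) = 2 if t = t^{(m)}_l for some l ∈ {0,…,4m₁m₂−1} with l ≢ 0 (mod m₁); (iii) #S^{(m)}(t) = 1 for all other t ∈ [0,2π). -/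
noncomputable section

/-- The rhodonea curve `ρ^{(m)}_α`. -/
def rho (m₁ m₂ : ℕ) (α : ℝ) (t : ℝ) : ℝ × ℝ :=
  (Real.cos (m₂ * t) * Real.cos (m₁ * t - α * Real.pi),
   Real.cos (m₂ * t) * Real.sin (m₁ * t - α * Real.pi))

/-- The sampling parameters `t^{(m)}_l = l π / (2 m₁ m₂)`. -/
def tSample (m₁ m₂ : ℕ) (l : ℕ) : ℝ := l * Real.pi / (2 * m₁ * m₂)

/-- The set `S^{(m)}(t)` of parameters in `[0, 2π)` hitting the same point as `t`. -/
def Sset (m₁ m₂ : ℕ) (α t : ℝ) : Set ℝ :=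
  {s | s ∈ Set.Ico (0 : ℝ) (2 * Real.pi) ∧ rho m₁ m₂ α s = rho m₁ m₂ α t}

/-- The sample point set `LS^{(m)}_α` along the rhodonea curve. -/
def LSa (m₁ m₂ : ℕ) (α : ℝ) : Set (ℝ × ℝ) :=
  {p | ∃ l : ℕ, l < 4 * m₁ * m₂ ∧ p = rho m₁ m₂ α (tSample m₁ m₂ l)}

/-- The nodal index set `I^{(m)}` as a set. -/
def Idx (m₁ m₂ : ℕ) : Set (ℤ × ℤ) :=
  {i | 0 ≤ i.1 ∧ i.1 ≤ (m₁ : ℤ) ∧ -(2 * (m₂ : ℤ)) < i.2 ∧ i.2 ≤ 2 * (m₂ : ℤ) ∧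
       (i.1 = (m₁ : ℤ) → i.2 ≤ 0) ∧ Even (i.1 + i.2)}

/-- The nodal index set `I^{(m)}` as a finset. -/
def IdxF (m₁ m₂ : ℕ) : Finset (ℤ × ℤ) :=
  (Finset.Icc (0 : ℤ) (m₁ : ℤ) ×ˢ Finset.Ioc (-(2 * (m₂ : ℤ))) (2 * (m₂ : ℤ))).filter
    (fun i => (i.1 = (m₁ : ℤ) → i.2 ≤ 0) ∧ Even (i.1 + i.2))

/-- Radial coordinate `r^{(m₁)}_{i₁} = cos(i₁ π / (2 m₁))`. -/
def rI (m₁ : ℕ) (i₁ : ℤ) : ℝ := Real.cos (i₁ * Real.pi / (2 * m₁))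

/-- Angular coordinate `θ^{(m₂)}_{i₂} = i₂ π / (2 m₂)`. -/
def thetaI (m₂ : ℕ) (i₂ : ℤ) : ℝ := i₂ * Real.pi / (2 * m₂)

/-- The rhodonea node `x^{(m)}_i` in Cartesian coordinates. -/
def node (m₁ m₂ : ℕ) (i : ℤ × ℤ) : ℝ × ℝ :=
  (rI m₁ i.1 * Real.cos (thetaI m₂ i.2), rI m₁ i.1 * Real.sin (thetaI m₂ i.2))

/-- The rhodonea node set `LS^{(m)}`. -/
def LS (m₁ m₂ : ℕ) : Set (ℝ × ℝ) := node m₁ m₂ '' Idx m₁ m₂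

/-- Chebyshev polynomial of the first kind, `T_n(r) = cos(n arccos r)`. -/
def chebT (n : ℕ) (r : ℝ) : ℝ := Real.cos (n * Real.arccos r)

/-- The closed unit disk `𝔻 ⊆ ℝ²`. -/
def closedDisk : Set (ℝ × ℝ) := {x | x.1 ^ 2 + x.2 ^ 2 ≤ 1}

/-- The weights `w^{(m)}_i`. -/
def wgt (m₁ m₂ : ℕ) (i : ℤ × ℤ) : ℝ :=
  if i.1 = 0 then 1 / (4 * m₁ * m₂) else 2 / (4 * m₁ * m₂)

/-- The discrete basis functions `χ^{(m)}_γ(i)`. -/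
def chi (m₁ m₂ : ℕ) (γ i : ℤ × ℤ) : ℂ :=
  (Real.cos (γ.1 * i.1 * Real.pi / (2 * m₁)) : ℂ) *
    Complex.exp (Complex.I * (γ.2 * i.2 * Real.pi / (2 * m₂)))

/-- The discrete inner product `⟨f, g⟩_w` on `L(I^{(m)})`. -/
def innerW (m₁ m₂ : ℕ) (f g : ℤ × ℤ → ℂ) : ℂ :=
  ∑ i ∈ IdxF m₁ m₂, (wgt m₁ m₂ i : ℂ) * f i * (starRingEnd ℂ) (g i)

/-- The rectangular spectral index set `Γ^{(m)}_□`. -/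
def GammaSq (m₁ m₂ : ℕ) : Finset (ℤ × ℤ) :=
  (Finset.Icc (0 : ℤ) (2 * (m₁ : ℤ)) ×ˢ Finset.Ioc (-(m₂ : ℤ)) (m₂ : ℤ)).filter
    (fun γ => Even (γ.1 + γ.2))

/-- The full frequency box `K^{(m)}`. -/
def KSet (m₁ m₂ : ℕ) : Finset (ℤ × ℤ) :=
  Finset.Icc (0 : ℤ) (2 * (m₁ : ℤ)) ×ˢ Finset.Ioc (-(2 * (m₂ : ℤ))) (2 * (m₂ : ℤ))

/-- The flip (glide-reflection) operator `γ ↦ γ*` on `K^{(m)}`, with second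
coordinate `(γ₂ + 2m₂) mod 4m₂` taken in `(-2m₂, 2m₂]`. -/
def flipOp (m₁ m₂ : ℕ) (γ : ℤ × ℤ) : ℤ × ℤ :=
  (2 * (m₁ : ℤ) - γ.1, if γ.2 ≤ 0 then γ.2 + 2 * (m₂ : ℤ) else γ.2 - 2 * (m₂ : ℤ))

/-- `Γ` is a spectral index set for `I^{(m)}`: a subset of `K^{(m)}` satisfying the
parity condition whose functions `χ^{(m)}_γ` form an orthogonal basis of `L(I^{(m)})`. -/
def IsSpectral (m₁ m₂ : ℕ) (Γ : Finset (ℤ × ℤ)) : Prop :=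
  Γ ⊆ KSet m₁ m₂ ∧ (∀ γ ∈ Γ, Even (γ.1 + γ.2)) ∧
  (∀ γ ∈ Γ, ∀ γ' ∈ Γ, γ ≠ γ' → innerW m₁ m₂ (chi m₁ m₂ γ) (chi m₁ m₂ γ') = 0) ∧
  LinearIndependent ℂ (fun γ : ↥Γ => fun i : ↥(IdxF m₁ m₂) => chi m₁ m₂ γ.1 i.1) ∧
  Submodule.span ℂ
    (Set.range (fun γ : ↥Γ => fun i : ↥(IdxF m₁ m₂) => chi m₁ m₂ γ.1 i.1)) = ⊤

/-- The real discrete basis functions `χ^{(m)}_{ℛ,γ}(i)` (for `γ ∈ Γ`). -/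
def chiR (m₁ m₂ : ℕ) (Γ : Finset (ℤ × ℤ)) (γ i : ℤ × ℤ) : ℝ :=
  Real.cos (γ.1 * i.1 * Real.pi / (2 * m₁)) *
    (if ((γ.1, -γ.2) ∈ Γ ∧ 0 ≤ γ.2) ∨ ((γ.1, -γ.2) ∉ Γ ∧ γ.1 ≤ (m₁ : ℤ))
     then Real.cos (γ.2 * i.2 * Real.pi / (2 * m₂))
     else Real.sin (γ.2 * i.2 * Real.pi / (2 * m₂)))

/-- The Chebyshev–Fourier basis functions `X_γ(r, θ) = T_{γ₁}(r) e^{i γ₂ θ}`. -/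
def Xfun (γ : ℤ × ℤ) (p : ℝ × ℝ) : ℂ :=
  (Real.cos (γ.1 * Real.arccos p.1) : ℂ) * Complex.exp (Complex.I * (γ.2 * p.2))

/-- The real Chebyshev–Fourier basis functions `X_{ℛ,γ}` (for `γ ∈ Γ`). -/
def XRfun (m₁ : ℕ) (Γ : Finset (ℤ × ℤ)) (γ : ℤ × ℤ) (p : ℝ × ℝ) : ℝ :=
  Real.cos (γ.1 * Real.arccos p.1) *
    (if ((γ.1, -γ.2) ∈ Γ ∧ 0 ≤ γ.2) ∨ ((γ.1, -γ.2) ∉ Γ ∧ γ.1 ≤ (m₁ : ℤ))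
     then Real.cos (γ.2 * p.2) else Real.sin (γ.2 * p.2))

/-- The Lagrange functions `L^{(m)}_i`. -/
def Lag (m₁ m₂ : ℕ) (Γ : Finset (ℤ × ℤ)) (i : ℤ × ℤ) (p : ℝ × ℝ) : ℂ :=
  (wgt m₁ m₂ i : ℂ) *
    ∑ γ ∈ Γ, ((starRingEnd ℂ) (chi m₁ m₂ γ i) /
      innerW m₁ m₂ (chi m₁ m₂ γ) (chi m₁ m₂ γ)) * Xfun γ p

/-- The complex-valued version of `X_{ℛ,γ}`. -/
def XRc (m₁ : ℕ) (Γ : Finset (ℤ × ℤ)) (γ : ℤ × ℤ) (p : ℝ × ℝ) : ℂ :=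
  (XRfun m₁ Γ γ p : ℂ)

/-- The real Lagrange functions `L^{(m)}_{ℛ,i}`. -/
def LagR (m₁ m₂ : ℕ) (Γ : Finset (ℤ × ℤ)) (i : ℤ × ℤ) (p : ℝ × ℝ) : ℂ :=
  (wgt m₁ m₂ i : ℂ) *
    ∑ γ ∈ Γ, ((chiR m₁ m₂ Γ γ i /
        (∑ j ∈ IdxF m₁ m₂, wgt m₁ m₂ j * chiR m₁ m₂ Γ γ j ^ 2) : ℝ) : ℂ) * XRc m₁ Γ γ p

end

/-!
In complex form, `2 e^{iαπ} ρ(t) = e^{i(m₁+m₂)t} + e^{i(m₁-m₂)t}`. Two sums of two unit vectors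
agree only if the summands agree up to order, or if both sums vanish; the latter happens exactly
at the `2m₂` parameters with `cos(m₂t) = 0`, where `ρ` passes through the origin. As `m₁ + m₂` is
odd, `m₁ + m₂` and `m₁ - m₂` are coprime, so summands agreeing in the same order force `s = t`
modulo `2π`, and summands agreeing in swapped order determine `s` modulo `2π` uniquely. Such a
swap partner exists iff `4m₁m₂t ∈ 2πℤ`, i.e. iff `t = t_l` is a sampling parameter, and it
differs from `t` iff `2m₁ ∤ l`.
-/

open Real AddCommGroup

lemma Int.isCoprime_add_sub {a b : ℤ} (h : IsCoprime a b) (hodd : Odd (a + b)) :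
    IsCoprime (a + b) (a - b) := by
  have h2a : IsCoprime (a + b) (2 * a) :=
    (Int.isCoprime_two_right.2 hodd).mul_right
      (by simpa [add_comm] using h.symm.add_mul_left_left 1)
  have hsub : a - b = 2 * a + (a + b) * -1 := by ring
  exact hsub ▸ h2a.add_mul_left_right (-1)

lemma AddCommGroup.ModEq.of_zsmul_of_isCoprime {G : Type*} [AddCommGroup G] {p a b : G}
    {m n : ℤ} (hmn : IsCoprime m n) (hm : m • a ≡ m • b [PMOD p])
    (hn : n • a ≡ n • b [PMOD p]) : a ≡ b [PMOD p] := by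
  obtain ⟨u, v, huv⟩ := hmn
  have h := (hm.zsmul (z := u)).of_zsmul.add (hn.zsmul (z := v)).of_zsmul
  simpa only [smul_smul, ← add_smul, huv, one_smul] using h

lemma AddCommGroup.modEq_iff_eq_of_mem_Ico {α : Type*} [AddCommGroup α] [LinearOrder α]
    [IsOrderedAddMonoid α] [Archimedean α] {p a s t : α} (hp : 0 < p)
    (hs : s ∈ Set.Ico a (a + p)) (ht : t ∈ Set.Ico a (a + p)) : s ≡ t [PMOD p] ↔ s = t := by
  rw [← toIcoMod_inj hp (c := a), (toIcoMod_eq_self hp).2 hs, (toIcoMod_eq_self hp).2 ht]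

lemma Nat.modEq_zero_iff_two_mul {n l : ℕ} :
    l ≡ 0 [MOD n] ↔ l ≡ 0 [MOD 2 * n] ∨ l ≡ n [MOD 2 * n] := by
  constructor
  · intro h
    obtain ⟨j, rfl⟩ := Nat.modEq_zero_iff_dvd.1 h
    obtain ⟨i, rfl | rfl⟩ := Nat.even_or_odd' j
    · exact Or.inl (Nat.modEq_zero_iff_dvd.2 ⟨i, by ring⟩)
    · refine Or.inr ?_
      rw [Nat.ModEq, show n * (2 * i + 1) = n + 2 * n * i by ring, Nat.add_mul_mod_self_left]
  · rintro (h | h)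
    · exact h.of_mul_left 2
    · exact (h.of_mul_left 2).trans (Nat.modEq_zero_iff_dvd.2 dvd_rfl)

/-- Conjugation turns `a + b = c + d` into `a⁻¹ + b⁻¹ = c⁻¹ + d⁻¹`, hence `a b = c d`
unless `a + b = 0`: then `{a, b}` and `{c, d}` are the roots of the same quadratic. -/
lemma Circle.eq_and_eq_or_eq_and_eq_or_add_eq_zero {a b c d : Circle}
    (h : (a : ℂ) + b = c + d) : (a = c ∧ b = d) ∨ (a = d ∧ b = c) ∨ (a : ℂ) + b = 0 := by
  by_cases hab : (a : ℂ) + b = 0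
  · exact Or.inr (Or.inr hab)
  have hconj := congrArg (starRingEnd ℂ) h
  simp only [map_add, ← Circle.coe_inv_eq_conj, Circle.coe_inv] at hconj
  have hprod : (a : ℂ) * b = c * d := by
    have : ((a : ℂ) + b) * (c * d) = (a + b) * (a * b) := by
      field_simp at hconj
      linear_combination hconj - (a : ℂ) * b * h
    exact (mul_left_cancel₀ hab this).symm
  have hroots : ((c : ℂ) - a) * (c - b) = 0 := by linear_combination (-(c : ℂ)) * h + hprod
  rcases mul_eq_zero.1 hroots with hca | hcb
  · have hca : (a : ℂ) = c := (sub_eq_zero.1 hca).symm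
    exact Or.inl ⟨Circle.ext hca, Circle.ext (by linear_combination h - hca)⟩
  · have hcb : (b : ℂ) = c := (sub_eq_zero.1 hcb).symm
    exact Or.inr (Or.inl ⟨Circle.ext (by linear_combination h - hcb), Circle.ext hcb⟩)

lemma ncard_setOf_cos_mul_eq_zero {n : ℕ} (hn : n ≠ 0) :
    {s : ℝ | s ∈ Set.Ico 0 (2 * π) ∧ Real.cos (n * s) = 0}.ncard = 2 * n := by
  have hn' : (0 : ℝ) < n := by positivity
  have hS : {s : ℝ | s ∈ Set.Ico 0 (2 * π) ∧ Real.cos (n * s) = 0} =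
      (fun k : ℕ => (2 * k + 1) * π / (2 * n)) '' (Finset.range (2 * n) : Set ℕ) := by
    ext s
    simp only [Set.mem_ofPred_eq, Set.mem_image, Finset.coe_range, Set.mem_Iio, Set.mem_Ico,
      Real.cos_eq_zero_iff]
    constructor
    · rintro ⟨⟨hs0, hs⟩, k, hk⟩
      have hks : s = (2 * k + 1) * π / (2 * n) := by field_simp; linarith
      have hk0 : (-1 : ℝ) < k := by nlinarith [pi_pos]
      have hk0 : (-1 : ℤ) < k := by exact_mod_cast hk0
      lift k to ℕ using by omega
      push_cast at hk hks
      have hk : (k : ℝ) < 2 * n := by nlinarith [pi_pos, mul_lt_mul_of_pos_left hs hn']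
      exact ⟨k, by exact_mod_cast hk, hks.symm⟩
    · rintro ⟨k, hk, rfl⟩
      have hk : (k : ℝ) + 1 ≤ 2 * n := by exact_mod_cast hk
      refine ⟨⟨by positivity, ?_⟩, k, ?_⟩
      · rw [div_lt_iff₀ (by positivity)]
        nlinarith [pi_pos]
      · field_simp
        push_cast
        ring
  rw [hS, Set.ncard_image_of_injective _ ?_, Set.ncard_coe_finset, Finset.card_range]
  intro k k' h
  have : (2 * k + 1 : ℝ) = 2 * k' + 1 := by
    simpa [pi_ne_zero, hn'.ne', mul_div_assoc] using h
  exact_mod_cast (by linarith : (k : ℝ) = k')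

namespace Rhodonea

variable {m₁ m₂ : ℕ}

lemma modEq_two_pi_iff_eq {s t : ℝ} (hs : s ∈ Set.Ico 0 (2 * π)) (ht : t ∈ Set.Ico 0 (2 * π)) :
    s ≡ t [PMOD 2 * π] ↔ s = t :=
  modEq_iff_eq_of_mem_Ico two_pi_pos (by rwa [zero_add]) (by rwa [zero_add])

noncomputable def circleSum (m₁ m₂ : ℕ) (t : ℝ) : ℂ :=
  Circle.exp ((m₁ + m₂ : ℤ) • t) + Circle.exp ((m₁ - m₂ : ℤ) • t)

lemma circleSum_eq (t : ℝ) :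
    circleSum m₁ m₂ t = 2 * Real.cos (m₂ * t) * Complex.exp (m₁ * t * Complex.I) := by
  simp only [circleSum, Circle.coe_exp, zsmul_eq_mul, Complex.ofReal_cos, Complex.cos]
  push_cast
  simp only [add_mul, sub_mul, neg_mul, Complex.exp_add, Complex.exp_sub, Complex.exp_neg]
  ring

lemma circleSum_eq_zero_iff (t : ℝ) : circleSum m₁ m₂ t = 0 ↔ Real.cos (m₂ * t) = 0 := by
  simp only [circleSum_eq, mul_eq_zero, two_ne_zero, Complex.exp_ne_zero, Complex.ofReal_eq_zero,
    false_or, or_false]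

lemma rho_eq_equivRealProd (α t : ℝ) : rho m₁ m₂ α t =
    Complex.equivRealProd (Complex.exp (-(α * π) * Complex.I) / 2 * circleSum m₁ m₂ t) := by
  have hz : Complex.exp (-(α * π) * Complex.I) / 2 * circleSum m₁ m₂ t =
      Real.cos (m₂ * t) * Complex.exp ((m₁ * t - α * π : ℝ) * Complex.I) := by
    rw [circleSum_eq, Complex.ofReal_sub, sub_mul, Complex.exp_sub, neg_mul, Complex.exp_neg]
    push_cast
    ring
  rw [hz]
  simp only [rho, Complex.equivRealProd_apply, Complex.re_ofReal_mul, Complex.im_ofReal_mul,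
    Complex.exp_ofReal_mul_I_re, Complex.exp_ofReal_mul_I_im]

lemma rho_eq_rho_iff_circleSum_eq (α s t : ℝ) :
    rho m₁ m₂ α s = rho m₁ m₂ α t ↔ circleSum m₁ m₂ s = circleSum m₁ m₂ t := by
  rw [rho_eq_equivRealProd, rho_eq_equivRealProd, Complex.equivRealProd.injective.eq_iff,
    mul_right_inj' (div_ne_zero (Complex.exp_ne_zero _) two_ne_zero)]

lemma rho_periodic (α : ℝ) : Function.Periodic (rho m₁ m₂ α) (2 * π) := by
  intro t
  have h : t + 2 * π ≡ t [PMOD 2 * π] := add_modEq_left.2 self_modEq_zero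
  rw [rho_eq_rho_iff_circleSum_eq, circleSum, circleSum, Circle.exp_inj.2 h.zsmul.of_zsmul,
    Circle.exp_inj.2 h.zsmul.of_zsmul]

lemma Sset_eq_of_cos_eq_zero {α t : ℝ} (hc : Real.cos (m₂ * t) = 0) :
    Sset m₁ m₂ α t = {s | s ∈ Set.Ico 0 (2 * π) ∧ Real.cos (m₂ * s) = 0} := by
  ext s
  simp only [Sset, Set.mem_ofPred_eq, rho_eq_rho_iff_circleSum_eq, (circleSum_eq_zero_iff t).2 hc,
    circleSum_eq_zero_iff]

/-- The two summands of `circleSum m₁ m₂` at `s` are those at `t`, in swapped order. -/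
def PhaseSwap (m₁ m₂ : ℕ) (s t : ℝ) : Prop :=
  (m₁ + m₂ : ℤ) • s ≡ (m₁ - m₂ : ℤ) • t [PMOD 2 * π] ∧
    (m₁ - m₂ : ℤ) • s ≡ (m₁ + m₂ : ℤ) • t [PMOD 2 * π]

lemma PhaseSwap.of_modEq {s s' t : ℝ} (hs : s ≡ s' [PMOD 2 * π]) (h : PhaseSwap m₁ m₂ s' t) :
    PhaseSwap m₁ m₂ s t :=
  ⟨hs.zsmul.of_zsmul.trans h.1, hs.zsmul.of_zsmul.trans h.2⟩

lemma phaseSwap_self_iff {t : ℝ} :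
    PhaseSwap m₁ m₂ t t ↔ (2 * m₂ : ℤ) • t ≡ 0 [PMOD 2 * π] := by
  have h : (m₁ + m₂ : ℤ) • t - (m₁ - m₂ : ℤ) • t = (2 * m₂ : ℤ) • t := by
    rw [← sub_smul]
    ring_nf
  rw [PhaseSwap, modEq_comm (a := (m₁ - m₂ : ℤ) • t), and_self, ← sub_modEq_zero, h]

lemma PhaseSwap.four_mul_zsmul_modEq_zero {s t : ℝ} (h : PhaseSwap m₁ m₂ s t) :
    (4 * m₁ * m₂ : ℤ) • t ≡ 0 [PMOD 2 * π] := by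
  obtain ⟨a, ha⟩ := modEq_iff_zsmul'.1 h.1
  obtain ⟨b, hb⟩ := modEq_iff_zsmul'.1 h.2
  refine modEq_iff_zsmul'.2 ⟨(m₁ - m₂) * a - (m₁ + m₂) * b, ?_⟩
  simp only [zsmul_eq_mul] at *
  push_cast at *
  linear_combination ((m₁ : ℝ) - m₂) * ha - ((m₁ : ℝ) + m₂) * hb

lemma four_mul_zsmul_modEq_zero_of_cos_eq_zero {t : ℝ} (hc : Real.cos (m₂ * t) = 0) :
    (4 * m₁ * m₂ : ℤ) • t ≡ 0 [PMOD 2 * π] := by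
  obtain ⟨k, hk⟩ := Real.cos_eq_zero_iff.1 hc
  refine modEq_zero_iff_eq_zsmul.2 ⟨m₁ * (2 * k + 1), ?_⟩
  simp only [zsmul_eq_mul]
  push_cast
  linear_combination (4 * (m₁ : ℝ)) * hk

section Coprime

variable (hPQ : IsCoprime ((m₁ : ℤ) + m₂) ((m₁ : ℤ) - m₂))
include hPQ

lemma rho_eq_rho_iff (α s t : ℝ) : rho m₁ m₂ α s = rho m₁ m₂ α t ↔
    s ≡ t [PMOD 2 * π] ∨ PhaseSwap m₁ m₂ s t ∨
      (Real.cos (m₂ * s) = 0 ∧ Real.cos (m₂ * t) = 0) := by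
  rw [rho_eq_rho_iff_circleSum_eq, ← circleSum_eq_zero_iff, ← circleSum_eq_zero_iff]
  constructor
  · intro h
    rcases Circle.eq_and_eq_or_eq_and_eq_or_add_eq_zero h with ⟨h₁, h₂⟩ | ⟨h₁, h₂⟩ | h₀
    · exact Or.inl ((Circle.exp_inj.1 h₁).of_zsmul_of_isCoprime hPQ (Circle.exp_inj.1 h₂))
    · exact Or.inr (Or.inl ⟨Circle.exp_inj.1 h₁, Circle.exp_inj.1 h₂⟩)
    · exact Or.inr (Or.inr ⟨h₀, h.symm.trans h₀⟩)
  · rintro (h | ⟨h₁, h₂⟩ | ⟨hs, ht⟩)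
    · rw [circleSum, circleSum, Circle.exp_inj.2 h.zsmul.of_zsmul,
        Circle.exp_inj.2 h.zsmul.of_zsmul]
    · rw [circleSum, circleSum, Circle.exp_inj.2 h₁, Circle.exp_inj.2 h₂, add_comm]
    · rw [hs, ht]

lemma PhaseSwap.modEq {s s' t : ℝ} (h : PhaseSwap m₁ m₂ s t) (h' : PhaseSwap m₁ m₂ s' t) :
    s ≡ s' [PMOD 2 * π] :=
  (h.1.trans h'.1.symm).of_zsmul_of_isCoprime hPQ (h.2.trans h'.2.symm)

/-- The partner is `(u (m₁ - m₂) + v (m₁ + m₂)) t`, where `u (m₁ + m₂) + v (m₁ - m₂) = 1`. -/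
lemma exists_phaseSwap {t : ℝ} (h : (4 * m₁ * m₂ : ℤ) • t ≡ 0 [PMOD 2 * π]) :
    ∃ s, PhaseSwap m₁ m₂ s t := by
  obtain ⟨u, v, huv⟩ := hPQ
  have huv' : (u : ℝ) * (m₁ + m₂) + v * (m₁ - m₂) = 1 := by exact_mod_cast huv
  obtain ⟨k, hk⟩ := modEq_iff_zsmul'.1 h
  simp only [zsmul_eq_mul] at hk
  push_cast at hk
  refine ⟨(u * (m₁ - m₂) + v * (m₁ + m₂) : ℤ) • t, modEq_iff_zsmul'.2 ⟨v * k, ?_⟩,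
    modEq_iff_zsmul'.2 ⟨-(u * k), ?_⟩⟩ <;> simp only [zsmul_eq_mul] <;> push_cast
  · linear_combination (-((m₁ : ℝ) - m₂) * t) * huv' + v * hk
  · linear_combination (-((m₁ : ℝ) + m₂) * t) * huv' - u * hk

variable {α t : ℝ} (ht : t ∈ Set.Ico 0 (2 * π)) (hc : Real.cos (m₂ * t) ≠ 0)
include ht hc

lemma mem_Sset_iff {s : ℝ} : s ∈ Sset m₁ m₂ α t ↔
    s = t ∨ (s ∈ Set.Ico 0 (2 * π) ∧ PhaseSwap m₁ m₂ s t) := by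
  simp only [Sset, Set.mem_ofPred_eq, rho_eq_rho_iff hPQ, hc, and_false, or_false]
  constructor
  · rintro ⟨hs, hst | hsw⟩
    · exact Or.inl ((modEq_two_pi_iff_eq hs ht).1 hst)
    · exact Or.inr ⟨hs, hsw⟩
  · rintro (rfl | ⟨hs, hsw⟩)
    · exact ⟨ht, Or.inl modEq_rfl⟩
    · exact ⟨hs, Or.inr hsw⟩

lemma Sset_eq_singleton (h : ∀ s, PhaseSwap m₁ m₂ s t → s ≡ t [PMOD 2 * π]) :
    Sset m₁ m₂ α t = {t} := by
  ext s
  rw [mem_Sset_iff hPQ ht hc, Set.mem_singleton_iff, or_iff_left_iff_imp]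
  exact fun ⟨hs, hsw⟩ => (modEq_two_pi_iff_eq hs ht).1 (h s hsw)

lemma ncard_Sset_eq_two {s₀ : ℝ} (hs₀ : PhaseSwap m₁ m₂ s₀ t) (hne : ¬ s₀ ≡ t [PMOD 2 * π]) :
    (Sset m₁ m₂ α t).ncard = 2 := by
  set s₁ := toIcoMod two_pi_pos 0 s₀
  have hs₁ : s₁ ∈ Set.Ico 0 (2 * π) := toIcoMod_mem_Ico' _ _
  have hs₁s₀ : s₁ ≡ s₀ [PMOD 2 * π] := modEq_iff_zsmul'.2 ⟨_, self_sub_toIcoMod _ _ _⟩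
  have hsw₁ : PhaseSwap m₁ m₂ s₁ t := hs₀.of_modEq hs₁s₀
  have hS : Sset m₁ m₂ α t = {t, s₁} := by
    ext s
    rw [mem_Sset_iff hPQ ht hc, Set.mem_insert_iff, Set.mem_singleton_iff]
    exact or_congr_right ⟨fun ⟨hs, hsw⟩ => (modEq_two_pi_iff_eq hs hs₁).1 (hsw.modEq hPQ hsw₁),
      fun h => h ▸ ⟨hs₁, hsw₁⟩⟩
  rw [hS, Set.ncard_pair]
  exact fun h => hne (h ▸ hs₁s₀.symm)

end Coprime

section tSample

variable (hm₁ : m₁ ≠ 0) (hm₂ : m₂ ≠ 0)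
include hm₁ hm₂

lemma mul_tSample (l : ℕ) : (m₂ : ℝ) * tSample m₁ m₂ l = l * π / (2 * m₁) := by
  rw [tSample]
  field_simp

lemma cos_mul_tSample_eq_zero_iff (l : ℕ) :
    Real.cos (m₂ * tSample m₁ m₂ l) = 0 ↔ l ≡ m₁ [MOD 2 * m₁] := by
  rw [mul_tSample hm₁ hm₂, Real.cos_eq_zero_iff, ← Int.natCast_modEq_iff, Int.modEq_iff_dvd]
  push_cast
  constructor
  · rintro ⟨k, hk⟩
    field_simp at hk
    have hk : (l : ℤ) = m₁ * (2 * k + 1) := by exact_mod_cast hk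
    exact ⟨-k, by linear_combination -hk⟩
  · rintro ⟨c, hc⟩
    have hc : (l : ℝ) = m₁ - 2 * m₁ * c := by
      exact_mod_cast (by linarith : (l : ℤ) = m₁ - 2 * m₁ * c)
    refine ⟨-c, ?_⟩
    rw [hc]
    push_cast
    field_simp
    ring

lemma two_mul_zsmul_tSample_modEq_zero_iff (l : ℕ) :
    (2 * m₂ : ℤ) • tSample m₁ m₂ l ≡ 0 [PMOD 2 * π] ↔ l ≡ 0 [MOD 2 * m₁] := by
  rw [modEq_zero_iff_eq_zsmul, Nat.modEq_zero_iff_dvd, ← Int.natCast_dvd_natCast]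
  simp only [zsmul_eq_mul]
  push_cast
  rw [mul_assoc, mul_tSample hm₁ hm₂]
  constructor
  · rintro ⟨z, hz⟩
    field_simp at hz
    exact ⟨z, by exact_mod_cast (by linarith : (l : ℝ) = 2 * m₁ * z)⟩
  · rintro ⟨z, hz⟩
    have hz : (l : ℝ) = 2 * m₁ * z := by exact_mod_cast hz
    refine ⟨z, ?_⟩
    rw [hz]
    field_simp

lemma exists_eq_tSample_iff {t : ℝ} :
    (t ∈ Set.Ico 0 (2 * π) ∧ (4 * m₁ * m₂ : ℤ) • t ≡ 0 [PMOD 2 * π]) ↔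
      ∃ l < 4 * m₁ * m₂, t = tSample m₁ m₂ l := by
  have hpos : (0 : ℝ) < 2 * m₁ * m₂ := by positivity
  constructor
  · rintro ⟨⟨ht0, ht⟩, h⟩
    obtain ⟨z, hz⟩ := modEq_zero_iff_eq_zsmul.1 h
    simp only [zsmul_eq_mul] at hz
    push_cast at hz
    have hz0 : (0 : ℝ) ≤ z := by nlinarith [pi_pos]
    lift z to ℕ using by exact_mod_cast hz0
    push_cast at hz
    refine ⟨z, ?_, ?_⟩
    · have hz4 : (z : ℝ) < 4 * m₁ * m₂ := by
        nlinarith [pi_pos, mul_lt_mul_of_pos_left ht (by positivity : (0 : ℝ) < 4 * m₁ * m₂)]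
      exact_mod_cast hz4
    · rw [tSample, eq_div_iff hpos.ne']
      linarith
  · rintro ⟨l, hl, rfl⟩
    have hl : (l : ℝ) + 1 ≤ 4 * m₁ * m₂ := by exact_mod_cast hl
    refine ⟨⟨by unfold tSample; positivity, ?_⟩, modEq_zero_iff_eq_zsmul.2 ⟨l, ?_⟩⟩
    · rw [tSample, div_lt_iff₀ hpos]
      nlinarith [pi_pos]
    · simp only [tSample, zsmul_eq_mul]
      push_cast
      field_simp
      ring

end tSample

lemma rho_not_periodic (hPQ : IsCoprime ((m₁ : ℤ) + m₂) ((m₁ : ℤ) - m₂)) (α : ℝ) {q : ℝ}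
    (hq0 : 0 < q) (hq : q < 2 * π) :
    ¬ Function.Periodic (rho m₁ m₂ α) q := by
  intro hper
  have h0 : Sset m₁ m₂ α 0 = {0} := Sset_eq_singleton hPQ ⟨le_rfl, two_pi_pos⟩ (by simp)
    fun s hs => hs.modEq hPQ (phaseSwap_self_iff.2 (by simp))
  have hq0' : q ∈ Sset m₁ m₂ α 0 := ⟨⟨hq0.le, hq⟩, by simpa using hper 0⟩
  rw [h0] at hq0'
  exact hq0.ne' hq0'

lemma ncard_Sset_tSample_of_modEq (hm₁ : m₁ ≠ 0) (α : ℝ) {l : ℕ} (hl : l < 4 * m₁ * m₂)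
    (hlm : l ≡ m₁ [MOD 2 * m₁]) :
    (Sset m₁ m₂ α (tSample m₁ m₂ l)).ncard = 2 * m₂ := by
  have hm₂ : m₂ ≠ 0 := by rintro rfl; simp at hl
  rw [Sset_eq_of_cos_eq_zero ((cos_mul_tSample_eq_zero_iff hm₁ hm₂ l).2 hlm),
    ncard_setOf_cos_mul_eq_zero hm₂]

lemma ncard_Sset_tSample_of_not_modEq_zero (hPQ : IsCoprime ((m₁ : ℤ) + m₂) ((m₁ : ℤ) - m₂))
    (hm₁ : m₁ ≠ 0) (α : ℝ) {l : ℕ} (hl : l < 4 * m₁ * m₂)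
    (hl0 : ¬ l ≡ 0 [MOD m₁]) : (Sset m₁ m₂ α (tSample m₁ m₂ l)).ncard = 2 := by
  have hm₂ : m₂ ≠ 0 := by rintro rfl; simp at hl
  obtain ⟨ht, h4⟩ := (exists_eq_tSample_iff hm₁ hm₂).2 ⟨l, hl, rfl⟩
  obtain ⟨s₀, hs₀⟩ := exists_phaseSwap hPQ h4
  have hc : Real.cos (m₂ * tSample m₁ m₂ l) ≠ 0 := fun hc => hl0
    (Nat.modEq_zero_iff_two_mul.2 (Or.inr ((cos_mul_tSample_eq_zero_iff hm₁ hm₂ l).1 hc)))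
  refine ncard_Sset_eq_two hPQ ht hc hs₀ fun hs₀t => hl0 (Nat.modEq_zero_iff_two_mul.2 (Or.inl ?_))
  exact (two_mul_zsmul_tSample_modEq_zero_iff hm₁ hm₂ l).1
    (phaseSwap_self_iff.1 (hs₀.of_modEq hs₀t.symm))

lemma ncard_Sset_eq_one (hPQ : IsCoprime ((m₁ : ℤ) + m₂) ((m₁ : ℤ) - m₂)) (hm₁ : m₁ ≠ 0)
    (α : ℝ) {t : ℝ} (ht : t ∈ Set.Ico 0 (2 * π))
    (h : ∀ l < 4 * m₁ * m₂, t = tSample m₁ m₂ l → l ≡ 0 [MOD 2 * m₁]) :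
    (Sset m₁ m₂ α t).ncard = 1 := by
  by_cases hc : Real.cos (m₂ * t) = 0
  · have hm₂ : m₂ ≠ 0 := by rintro rfl; simp at hc
    obtain ⟨l, hl, rfl⟩ := (exists_eq_tSample_iff hm₁ hm₂).1
      ⟨ht, four_mul_zsmul_modEq_zero_of_cos_eq_zero hc⟩
    have hm : m₁ ≡ 0 [MOD 2 * m₁] :=
      ((cos_mul_tSample_eq_zero_iff hm₁ hm₂ l).1 hc).symm.trans (h l hl rfl)
    rw [Nat.ModEq, Nat.mod_eq_of_lt (by omega)] at hm
    exact absurd (by simpa using hm) hm₁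
  rw [Sset_eq_singleton hPQ ht hc ?_, Set.ncard_singleton]
  intro s hs
  by_contra hst
  have hself : ¬ PhaseSwap m₁ m₂ t t := fun h => hst (hs.modEq hPQ h)
  rw [phaseSwap_self_iff] at hself
  have hm₂ : m₂ ≠ 0 := by rintro rfl; simp at hself
  obtain ⟨l, hl, rfl⟩ := (exists_eq_tSample_iff hm₁ hm₂).1 ⟨ht, hs.four_mul_zsmul_modEq_zero⟩
  exact hself ((two_mul_zsmul_tSample_modEq_zero_iff hm₁ hm₂ l).2 (h l hl rfl))

end Rhodonea

open Rhodonea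

theorem rhodonea_intersections_odd_general (m₁ m₂ : ℕ) (hm₁ : 0 < m₁)
    (hcop : Nat.Coprime m₁ m₂) (hodd : Odd (m₁ + m₂)) (α : ℝ) :
    (Function.Periodic (rho m₁ m₂ α) (2 * Real.pi) ∧
      ∀ q : ℝ, 0 < q → q < 2 * Real.pi → ¬ Function.Periodic (rho m₁ m₂ α) q) ∧
    (∀ l : ℕ, l < 4 * m₁ * m₂ → l ≡ m₁ [MOD 2 * m₁] →
      (Sset m₁ m₂ α (tSample m₁ m₂ l)).ncard = 2 * m₂) ∧
    (∀ l : ℕ, l < 4 * m₁ * m₂ → ¬ l ≡ 0 [MOD m₁] →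
      (Sset m₁ m₂ α (tSample m₁ m₂ l)).ncard = 2) ∧
    (∀ t : ℝ, t ∈ Set.Ico (0 : ℝ) (2 * Real.pi) →
      ¬ (∃ l : ℕ, l < 4 * m₁ * m₂ ∧ t = tSample m₁ m₂ l ∧
          (l ≡ m₁ [MOD 2 * m₁] ∨ ¬ l ≡ 0 [MOD m₁])) →
      (Sset m₁ m₂ α t).ncard = 1) := by
  have hPQ : IsCoprime ((m₁ : ℤ) + m₂) ((m₁ : ℤ) - m₂) :=
    Int.isCoprime_add_sub (Nat.isCoprime_iff_coprime.2 hcop) (by exact_mod_cast hodd.natCast)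
  refine ⟨⟨rho_periodic α, fun q => rho_not_periodic hPQ α⟩,
    fun l hl => ncard_Sset_tSample_of_modEq hm₁.ne' α hl,
    fun l hl => ncard_Sset_tSample_of_not_modEq_zero hPQ hm₁.ne' α hl,
    fun t ht hnot => ncard_Sset_eq_one hPQ hm₁.ne' α ht fun l hl htl => ?_⟩
  by_contra hl2
  refine hnot ⟨l, hl, htl, or_iff_not_imp_right.2 fun hl1 => ?_⟩
  exact (Nat.modEq_zero_iff_two_mul.1 (not_not.1 hl1)).resolve_left hl2

/-- Proposition 2.1 (case `m₁ + m₂` odd): minimal period `2π` and cardinalities of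
`S^{(m)}(t)` for `t ∈ [0, 2π)`. -/
theorem rhodonea_intersections_odd (m₁ m₂ : ℕ) (hm₁ : 0 < m₁) (hm₂ : 0 < m₂)
    (hcop : Nat.Coprime m₁ m₂) (hodd : Odd (m₁ + m₂)) (α : ℝ) :
    (Function.Periodic (rho m₁ m₂ α) (2 * Real.pi) ∧
      ∀ q : ℝ, 0 < q → q < 2 * Real.pi → ¬ Function.Periodic (rho m₁ m₂ α) q) ∧
    (∀ l : ℕ, l < 4 * m₁ * m₂ → l ≡ m₁ [MOD 2 * m₁] →
      (Sset m₁ m₂ α (tSample m₁ m₂ l)).ncard = 2 * m₂) ∧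
    (∀ l : ℕ, l < 4 * m₁ * m₂ → ¬ l ≡ 0 [MOD m₁] →
      (Sset m₁ m₂ α (tSample m₁ m₂ l)).ncard = 2) ∧
    (∀ t : ℝ, t ∈ Set.Ico (0 : ℝ) (2 * Real.pi) →
      ¬ (∃ l : ℕ, l < 4 * m₁ * m₂ ∧ t = tSample m₁ m₂ l ∧
          (l ≡ m₁ [MOD 2 * m₁] ∨ ¬ l ≡ 0 [MOD m₁])) →
      (Sset m₁ m₂ α t).ncard = 1) :=
  rhodonea_intersections_odd_general m₁ m₂ hm₁ hcop hodd α
end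

section
/- Let m₁ and m₂ be relatively prime natural numbers and let a, b ∈ ℤ satisfy a·m₁ + b·m₂ = 1. Then for all t ∈ ℝ the rhodonea curves satisfy ρ^{(m)}_0(t − aπ/m₂) = (−1)^{a+b} · ρ^{(m)}_{1/m₂}(t). -/
/-- Identity (2.8): `ρ^{(m)}_0(t - aπ/m₂) = (-1)^{a+b} ρ^{(m)}_{1/m₂}(t)` whenever
`a m₁ + b m₂ = 1`. -/
theorem rhodonea_rotation_identity (m₁ m₂ : ℕ) (hm₁ : 0 < m₁) (hm₂ : 0 < m₂)
    (hcop : Nat.Coprime m₁ m₂) (a b : ℤ) (hab : a * m₁ + b * m₂ = 1) (t : ℝ) :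
    rho m₁ m₂ 0 (t - a * Real.pi / m₂) =
      ((-1 : ℝ) ^ (a + b)) • rho m₁ m₂ (1 / m₂) t := by
  have hm2 : (m₂ : ℝ) ≠ 0 := Nat.cast_ne_zero.mpr hm₂.ne'
  have habR : (a : ℝ) * m₁ + b * m₂ = 1 := by exact_mod_cast hab
  have h1 : (m₂ : ℝ) * (t - a * Real.pi / m₂) = m₂ * t - a * Real.pi := by
    field_simp
  have h2 : (m₁ : ℝ) * (t - a * Real.pi / m₂) - 0 * Real.pi
      = ((m₁ : ℝ) * t - (1 / m₂) * Real.pi) + b * Real.pi := by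
    field_simp
    linear_combination (-Real.pi) * habR
  have hz : ((-1 : ℝ) ^ (a + b)) = (-1 : ℝ) ^ a * (-1 : ℝ) ^ b :=
    zpow_add₀ (by norm_num) a b
  simp only [rho, Prod.smul_mk, smul_eq_mul]
  rw [h1, h2, Real.cos_sub_int_mul_pi, Real.cos_add_int_mul_pi,
    Real.sin_add_int_mul_pi, hz]
  simp only [Prod.mk.injEq]
  constructor <;> ring
end

section
/- Let m = (m₁,m₂) ∈ ℕ² with g = gcd(m₁,m₂). Then the rhodonea node set satisfies LS^{(m)} = ⋃_{ρ=0}^{2g−1} {ρ^{(m)}_{ρ/m₂}(t^{(m)}_l) : l ∈ {0,…,4m₁m₂/g − 1}}, i.e., LS^{(m)} is exactly the set of time-equidistant samples along the 2g rotated rhodonea curves ρ^{(m)}_{ρ/m₂}, ρ = 0,…,2g−1. -/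
-- ===== auxiliary material =====

noncomputable def pt (m₁ m₂ : ℕ) (a b : ℤ) : ℝ × ℝ :=
  ((Real.cos (a * Real.pi / (2 * m₁))) * Real.cos (b * Real.pi / (2 * m₂)),
   (Real.cos (a * Real.pi / (2 * m₁))) * Real.sin (b * Real.pi / (2 * m₂)))

lemma node_eq_pt (m₁ m₂ : ℕ) (i : ℤ × ℤ) : node m₁ m₂ i = pt m₁ m₂ i.1 i.2 := rfl

lemma cos_congr' (n : ℕ) (hn : 0 < n) {a b : ℤ} (h : (4 * (n:ℤ)) ∣ (a - b)) :
    Real.cos ((a:ℝ) * Real.pi / (2 * n)) = Real.cos ((b:ℝ) * Real.pi / (2 * n)) := by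
  obtain ⟨k, hk⟩ := h
  have ha : (a:ℝ) = b + 4 * n * k := by
    have : a = b + 4 * n * k := by linarith
    exact_mod_cast congrArg (Int.cast : ℤ → ℝ) this
  have hn' : (n:ℝ) ≠ 0 := Nat.cast_ne_zero.mpr hn.ne'
  have : (a:ℝ) * Real.pi / (2 * n) = (b:ℝ) * Real.pi / (2 * n) + k * (2 * Real.pi) := by
    rw [ha]; field_simp; ring
  rw [this, Real.cos_add_int_mul_two_pi]

lemma sin_congr' (n : ℕ) (hn : 0 < n) {a b : ℤ} (h : (4 * (n:ℤ)) ∣ (a - b)) :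
    Real.sin ((a:ℝ) * Real.pi / (2 * n)) = Real.sin ((b:ℝ) * Real.pi / (2 * n)) := by
  obtain ⟨k, hk⟩ := h
  have ha : (a:ℝ) = b + 4 * n * k := by
    have : a = b + 4 * n * k := by linarith
    exact_mod_cast congrArg (Int.cast : ℤ → ℝ) this
  have hn' : (n:ℝ) ≠ 0 := Nat.cast_ne_zero.mpr hn.ne'
  have : (a:ℝ) * Real.pi / (2 * n) = (b:ℝ) * Real.pi / (2 * n) + k * (2 * Real.pi) := by
    rw [ha]; field_simp; ring
  rw [this, Real.sin_add_int_mul_two_pi]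

lemma pt_congr (m₁ m₂ : ℕ) (h₁ : 0 < m₁) (h₂ : 0 < m₂) {a a' b b' : ℤ}
    (ha : (4 * (m₁:ℤ)) ∣ (a - a')) (hb : (4 * (m₂:ℤ)) ∣ (b - b')) :
    pt m₁ m₂ a b = pt m₁ m₂ a' b' := by
  unfold pt
  rw [cos_congr' m₁ h₁ ha, cos_congr' m₂ h₂ hb, sin_congr' m₂ h₂ hb]

lemma pt_neg_left (m₁ m₂ : ℕ) (a b : ℤ) : pt m₁ m₂ (-a) b = pt m₁ m₂ a b := by
  unfold pt
  have : ((-a : ℤ) : ℝ) * Real.pi / (2 * m₁) = -((a:ℝ) * Real.pi / (2 * m₁)) := by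
    push_cast; ring
  rw [this, Real.cos_neg]

lemma pt_flip' (m₁ m₂ : ℕ) (h₁ : 0 < m₁) (h₂ : 0 < m₂) (a b : ℤ) :
    pt m₁ m₂ (2 * m₁ - a) (b + 2 * m₂) = pt m₁ m₂ a b := by
  unfold pt
  have hm₁ : (m₁:ℝ) ≠ 0 := Nat.cast_ne_zero.mpr h₁.ne'
  have hm₂ : (m₂:ℝ) ≠ 0 := Nat.cast_ne_zero.mpr h₂.ne'
  have e1 : ((2 * (m₁:ℤ) - a : ℤ) : ℝ) * Real.pi / (2 * m₁)
      = Real.pi - (a:ℝ) * Real.pi / (2 * m₁) := by push_cast; field_simp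
  have e2 : ((b + 2 * (m₂:ℤ) : ℤ) : ℝ) * Real.pi / (2 * m₂)
      = (b:ℝ) * Real.pi / (2 * m₂) + Real.pi := by push_cast; field_simp
  rw [e1, e2, Real.cos_pi_sub, Real.cos_add_pi, Real.sin_add_pi]
  rw [Prod.mk.injEq]; constructor <;> ring

lemma pt_origin (m₁ m₂ : ℕ) (h₁ : 0 < m₁) (b b' : ℤ) :
    pt m₁ m₂ (m₁ : ℤ) b = pt m₁ m₂ (m₁ : ℤ) b' := by
  unfold pt
  have hm₁ : (m₁:ℝ) ≠ 0 := Nat.cast_ne_zero.mpr h₁.ne'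
  have e : (((m₁:ℤ)):ℝ) * Real.pi / (2 * m₁) = Real.pi / 2 := by
    push_cast; field_simp
  rw [e, Real.cos_pi_div_two]
  simp

lemma rho_sample (m₁ m₂ : ℕ) (h₁ : 0 < m₁) (h₂ : 0 < m₂) (ρ l : ℕ) :
    rho m₁ m₂ ((ρ:ℝ)/m₂) (tSample m₁ m₂ l) = pt m₁ m₂ (l:ℤ) ((l:ℤ) - 2*(ρ:ℤ)) := by
  unfold rho tSample pt
  have hm₁ : (m₁:ℝ) ≠ 0 := Nat.cast_ne_zero.mpr h₁.ne'
  have hm₂ : (m₂:ℝ) ≠ 0 := Nat.cast_ne_zero.mpr h₂.ne'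
  have e1 : (m₂:ℝ) * ((l:ℝ) * Real.pi / (2 * m₁ * m₂)) = (((l:ℤ)):ℝ) * Real.pi / (2 * m₁) := by
    push_cast; field_simp
  have e2 : (m₁:ℝ) * ((l:ℝ) * Real.pi / (2 * m₁ * m₂)) - ((ρ:ℝ)/m₂) * Real.pi
      = (((l:ℤ) - 2*(ρ:ℤ)):ℝ) * Real.pi / (2 * m₂) := by
    push_cast; field_simp
  rw [e1, e2]; norm_cast

lemma pt_mem (m₁ m₂ : ℕ) (h₁ : 0 < m₁) (h₂ : 0 < m₂) (x y : ℤ) (hxy : Even (x + y)) :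
    ∃ i : ℤ × ℤ, i ∈ Idx m₁ m₂ ∧ pt m₁ m₂ x y = pt m₁ m₂ i.1 i.2 := by
  have h4m₁ : (0:ℤ) < 4 * m₁ := by positivity
  have h4m₂ : (0:ℤ) < 4 * m₂ := by positivity
  -- step 1: reduce first coordinate into [0, 2m₁]
  obtain ⟨A, hA0, hA2, hApar, hAeq⟩ :
      ∃ A, 0 ≤ A ∧ A ≤ 2 * (m₁:ℤ) ∧ (2 ∣ A - x) ∧ pt m₁ m₂ x y = pt m₁ m₂ A y := by
    set A₀ := x % (4 * (m₁:ℤ)) with hA₀def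
    have h0 : 0 ≤ A₀ := Int.emod_nonneg x h4m₁.ne'
    have h1 : A₀ < 4 * m₁ := Int.emod_lt_of_pos x h4m₁
    have hq := Int.emod_add_mul_ediv x (4 * (m₁:ℤ))
    set k := x / (4 * (m₁:ℤ)) with hkdef
    have hx : x = A₀ + 4 * m₁ * k := by linarith [hq]
    have hdvd : (4 * (m₁:ℤ)) ∣ (x - A₀) := ⟨k, by linarith⟩
    have heq0 : pt m₁ m₂ x y = pt m₁ m₂ A₀ y :=
      pt_congr m₁ m₂ h₁ h₂ hdvd (by simp)
    rcases le_or_gt A₀ (2 * (m₁:ℤ)) with h | h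
    · exact ⟨A₀, h0, h, ⟨-(2 * (m₁:ℤ) * k), by linarith⟩, heq0⟩
    · refine ⟨4 * m₁ - A₀, by omega, by omega,
        ⟨2 * (m₁:ℤ) - A₀ - 2 * m₁ * k, by linarith⟩, ?_⟩
      rw [heq0]
      have e1 : pt m₁ m₂ A₀ y = pt m₁ m₂ (A₀ - 4 * m₁) y :=
        pt_congr m₁ m₂ h₁ h₂ ⟨1, by ring⟩ (by simp)
      have e2 : A₀ - 4 * (m₁:ℤ) = -(4 * m₁ - A₀) := by ring
      rw [e1, e2, pt_neg_left]
  -- step 2: reduce first coordinate into [0, m₁]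
  obtain ⟨i₁, y', hi₁0, hi₁m, hpar1, heq1⟩ :
      ∃ i₁ y', 0 ≤ i₁ ∧ i₁ ≤ (m₁:ℤ) ∧ (2 ∣ (i₁ + y') - (A + y)) ∧
        pt m₁ m₂ A y = pt m₁ m₂ i₁ y' := by
    rcases le_or_gt A (m₁:ℤ) with h | h
    · exact ⟨A, y, hA0, h, ⟨0, by ring⟩, rfl⟩
    · exact ⟨2 * m₁ - A, y + 2 * m₂, by omega, by omega,
        ⟨(m₁:ℤ) - A + m₂, by ring⟩, (pt_flip' m₁ m₂ h₁ h₂ A y).symm⟩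
  -- step 3: reduce second coordinate into (-2m₂, 2m₂]
  obtain ⟨i₂, hi₂l, hi₂r, hpar2, heq2⟩ :
      ∃ i₂, -(2 * (m₂:ℤ)) < i₂ ∧ i₂ ≤ 2 * (m₂:ℤ) ∧ (2 ∣ i₂ - y') ∧
        pt m₁ m₂ i₁ y' = pt m₁ m₂ i₁ i₂ := by
    set R := y' % (4 * (m₂:ℤ)) with hRdef
    have h0 : 0 ≤ R := Int.emod_nonneg y' h4m₂.ne'
    have h1 : R < 4 * m₂ := Int.emod_lt_of_pos y' h4m₂
    have hq := Int.emod_add_mul_ediv y' (4 * (m₂:ℤ))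
    set k := y' / (4 * (m₂:ℤ)) with hkdef
    have hy : y' = R + 4 * m₂ * k := by linarith [hq]
    rcases le_or_gt R (2 * (m₂:ℤ)) with h | h
    · refine ⟨R, by omega, h, ⟨-(2 * (m₂:ℤ) * k), by linarith⟩, ?_⟩
      exact pt_congr m₁ m₂ h₁ h₂ (by simp) ⟨k, by linarith⟩
    · refine ⟨R - 4 * m₂, by omega, by omega,
        ⟨-(2 * (m₂:ℤ)) - 2 * m₂ * k, by linarith⟩, ?_⟩
      exact pt_congr m₁ m₂ h₁ h₂ (by simp) ⟨k + 1, by linarith⟩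
  have hEven : Even (i₁ + i₂) := by
    obtain ⟨s, hs⟩ := hxy
    obtain ⟨a1, ha1⟩ := hApar
    obtain ⟨a2, ha2⟩ := hpar1
    obtain ⟨a3, ha3⟩ := hpar2
    exact ⟨a1 + a2 + a3 + s, by linarith⟩
  -- step 4: boundary fix
  by_cases hb : i₁ = (m₁:ℤ) ∧ 0 < i₂
  · refine ⟨((m₁:ℤ), i₂ - 2 * m₂), ⟨by positivity, le_refl _, by omega, by omega,
      fun _ => by omega, ?_⟩, ?_⟩
    · obtain ⟨s, hs⟩ := hEven
      exact ⟨s - m₂, by omega⟩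
    · rw [hAeq, heq1, heq2, hb.1]
      exact pt_origin m₁ m₂ h₁ i₂ (i₂ - 2 * m₂)
  · refine ⟨(i₁, i₂), ⟨hi₁0, hi₁m, hi₂l, hi₂r, fun h => ?_, hEven⟩, ?_⟩
    · by_contra hc
      exact hb ⟨h, by omega⟩
    · rw [hAeq, heq1, heq2]

/-- Theorem 3.1: the rhodonea nodes `LS^{(m)}` are exactly the time-equidistant
samples along the `2g` rotated rhodonea curves `ρ^{(m)}_{ρ/m₂}`, `ρ = 0, …, 2g-1`. -/
theorem rhodonea_nodes_eq_samples (m₁ m₂ : ℕ) (hm₁ : 0 < m₁) (hm₂ : 0 < m₂)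
    (g : ℕ) (hg : g = Nat.gcd m₁ m₂) :
    LS m₁ m₂ = ⋃ ρ ∈ Finset.range (2 * g),
      {p : ℝ × ℝ | ∃ l : ℕ, l < 4 * m₁ * m₂ / g ∧
        p = rho m₁ m₂ ((ρ : ℝ) / m₂) (tSample m₁ m₂ l)} := by
  have hgpos : 0 < g := hg ▸ Nat.gcd_pos_of_pos_left m₂ hm₁
  have hgm₁ : g ∣ m₁ := hg ▸ Nat.gcd_dvd_left m₁ m₂
  have hgm₂ : g ∣ m₂ := hg ▸ Nat.gcd_dvd_right m₁ m₂
  set Mn : ℕ := 4 * m₁ * (m₂ / g) with hMn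
  have hM : 4 * m₁ * m₂ / g = Mn := by rw [hMn, Nat.mul_div_assoc _ hgm₂]
  have hMnpos : 0 < Mn := by
    have h' : 0 < m₂ / g := Nat.div_pos (Nat.le_of_dvd hm₂ hgm₂) hgpos
    positivity
  have hdivM₁ : (4 * (m₁:ℤ)) ∣ (Mn : ℤ) := by
    refine ⟨((m₂ / g : ℕ) : ℤ), ?_⟩
    have := congrArg (Nat.cast : ℕ → ℤ) hMn
    push_cast at this ⊢
    linarith [this]
  have hkey : m₁ * (m₂ / g) = m₂ * (m₁ / g) := by
    apply Nat.eq_of_mul_eq_mul_right hgpos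
    rw [mul_assoc, Nat.div_mul_cancel hgm₂, mul_assoc, Nat.div_mul_cancel hgm₁, mul_comm]
  have hdivM₂ : (4 * (m₂:ℤ)) ∣ (Mn : ℤ) := by
    refine ⟨((m₁ / g : ℕ) : ℤ), ?_⟩
    have h2 : Mn = 4 * (m₂ * (m₁ / g)) := by rw [hMn, mul_assoc, hkey]
    have := congrArg (Nat.cast : ℕ → ℤ) h2
    push_cast at this ⊢
    linarith [this]
  ext p
  simp only [Set.mem_iUnion, Finset.mem_range, Set.mem_setOf_eq]
  constructor
  · rintro ⟨i, hi, rfl⟩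
    obtain ⟨h0, h1, h2, h3, h4, h5⟩ := hi
    obtain ⟨d, hd⟩ := h5
    set D : ℤ := i.1 - d with hD
    have hGpos : (0:ℤ) < 2 * g := by positivity
    set ρz : ℤ := D % (2 * (g:ℤ)) with hρz
    have hρ0 : 0 ≤ ρz := Int.emod_nonneg D hGpos.ne'
    have hρlt : ρz < 2 * g := Int.emod_lt_of_pos D hGpos
    have hqq := Int.emod_add_mul_ediv D (2 * (g:ℤ))
    rw [← hρz] at hqq
    set q : ℤ := D / (2 * (g:ℤ)) with hqdef
    have hA4g : i.1 - i.2 - 2 * ρz = 4 * (g:ℤ) * q := by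
      have hDG : i.1 - i.2 = 2 * D := by omega
      linear_combination hDG - 2 * hqq
    set u : ℤ := Nat.gcdA m₁ m₂ with hu
    set v : ℤ := Nat.gcdB m₁ m₂ with hv
    have hguv : (g:ℤ) = m₁ * u + m₂ * v := by
      rw [hg]; exact_mod_cast Nat.gcd_eq_gcd_ab m₁ m₂
    set lz : ℤ := i.1 - 4 * m₁ * u * q with hlz
    have hlz1 : (4 * (m₁:ℤ)) ∣ (lz - i.1) := ⟨-(u * q), by rw [hlz]; ring⟩
    have hlz2 : (4 * (m₂:ℤ)) ∣ (lz - (i.2 + 2 * ρz)) :=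
      ⟨q * v, by rw [hlz]; linear_combination hA4g + (4 * q) * hguv⟩
    have hMz : (0:ℤ) < (Mn:ℤ) := by exact_mod_cast hMnpos
    set L : ℤ := lz % (Mn : ℤ) with hL
    have hL0 : 0 ≤ L := Int.emod_nonneg lz hMz.ne'
    have hLlt : L < Mn := Int.emod_lt_of_pos lz hMz
    have hqL := Int.emod_add_mul_ediv lz (Mn : ℤ)
    rw [← hL] at hqL
    have hLl : ((Mn:ℤ)) ∣ (L - lz) := ⟨-(lz / (Mn:ℤ)), by linarith⟩
    have hML₁ : (4 * (m₁:ℤ)) ∣ (L - lz) := dvd_trans hdivM₁ hLl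
    have hML₂ : (4 * (m₂:ℤ)) ∣ (L - lz) := dvd_trans hdivM₂ hLl
    have ha' : (4 * (m₁:ℤ)) ∣ (i.1 - L) := by
      have h' := dvd_add hML₁ hlz1
      have e : L - lz + (lz - i.1) = -(i.1 - L) := by ring
      rw [e] at h'
      exact (dvd_neg).mp h'
    have hb' : (4 * (m₂:ℤ)) ∣ (i.2 - (L - 2 * ρz)) := by
      have h' := dvd_add hML₂ hlz2
      have e : L - lz + (lz - (i.2 + 2 * ρz)) = -(i.2 - (L - 2 * ρz)) := by ring
      rw [e] at h'
      exact (dvd_neg).mp h'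
    refine ⟨ρz.toNat, by omega, L.toNat, by rw [hM]; omega, ?_⟩
    have hρcast : ((ρz.toNat : ℕ) : ℤ) = ρz := Int.toNat_of_nonneg hρ0
    have hLcast : ((L.toNat : ℕ) : ℤ) = L := Int.toNat_of_nonneg hL0
    rw [node_eq_pt, rho_sample m₁ m₂ hm₁ hm₂, hρcast, hLcast]
    exact pt_congr m₁ m₂ hm₁ hm₂ ha' hb'
  · rintro ⟨ρ, hρ, l, hl, rfl⟩
    rw [rho_sample m₁ m₂ hm₁ hm₂]
    have hxy : Even ((l:ℤ) + ((l:ℤ) - 2 * (ρ:ℤ))) := ⟨(l:ℤ) - ρ, by ring⟩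
    obtain ⟨i, hi, heq⟩ := pt_mem m₁ m₂ hm₁ hm₂ _ _ hxy
    exact ⟨i, hi, ((node_eq_pt m₁ m₂ i).trans heq.symm)⟩
end

section
/- Let m = (m₁,m₂) ∈ ℕ² with g = gcd(m₁,m₂) and let P = 2π if m₁/g + m₂/g is odd and P = π otherwise. The rhodonea variety 𝓡^{(m)} = {x(r,θ) ∈ 𝔻 : T_{m₁}(r)² = cos²(m₂θ)} (in polar coordinates x(r,θ) = (r cos θ, r sin θ), r ∈ [0,1]) decomposes as 𝓡^{(m)} = ⋃_{ρ=0}^{2g−1} ρ^{(m)}_{ρ/m₂}([0,P)), where T_{m₁} is the Chebyshev polynomial of the first kind of degree m₁. -/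
section AuxRhodonea

private lemma aux_cos_sq_add_int_mul_pi (x : ℝ) (j : ℤ) :
    Real.cos (x + j * Real.pi) ^ 2 = Real.cos x ^ 2 := by
  rw [Real.cos_add_int_mul_pi]
  rcases Int.even_or_odd j with h | h
  · rw [h.neg_one_zpow]; ring
  · rw [Odd.neg_one_zpow h]; ring

private lemma aux_cheb_cos (n : ℕ) (x : ℝ) :
    Real.cos (n * Real.arccos (Real.cos x)) = Real.cos (n * x) := by
  have h : Real.cos (Real.arccos (Real.cos x)) = Real.cos x :=
    Real.cos_arccos (Real.neg_one_le_cos x) (Real.cos_le_one x)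
  obtain ⟨k, hk | hk⟩ := Real.cos_eq_cos_iff.mp h
  · have h3 : Real.arccos (Real.cos x) = x - 2 * k * Real.pi := by linarith
    have h2 : (n : ℝ) * Real.arccos (Real.cos x)
        = n * x + ((-((n : ℤ) * k) : ℤ) : ℝ) * (2 * Real.pi) := by
      rw [h3]; push_cast; ring
    rw [h2, Real.cos_add_int_mul_two_pi]
  · have h3 : Real.arccos (Real.cos x) = 2 * k * Real.pi - x := by linarith
    have h2 : (n : ℝ) * Real.arccos (Real.cos x)
        = -(n * x) + (((n : ℤ) * k : ℤ) : ℝ) * (2 * Real.pi) := by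
      rw [h3]; push_cast; ring
    rw [h2, Real.cos_add_int_mul_two_pi, Real.cos_neg]

private lemma aux_rho_periodic (m₁ m₂ : ℕ) (α P : ℝ)
    (hP : P = 2 * Real.pi ∨ (P = Real.pi ∧ Even (m₁ + m₂))) :
    Function.Periodic (rho m₁ m₂ α) P := by
  intro t
  rcases hP with h | ⟨h, hpar⟩
  · subst h
    unfold rho
    rw [show (m₂ : ℝ) * (t + 2 * Real.pi) = m₂ * t + m₂ * (2 * Real.pi) from by ring,
        show (m₁ : ℝ) * (t + 2 * Real.pi) - α * Real.pi
          = (m₁ * t - α * Real.pi) + m₁ * (2 * Real.pi) from by ring,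
        Real.cos_add_nat_mul_two_pi, Real.cos_add_nat_mul_two_pi,
        Real.sin_add_nat_mul_two_pi]
  · subst h
    unfold rho
    rw [show (m₂ : ℝ) * (t + Real.pi) = m₂ * t + m₂ * Real.pi from by ring,
        show (m₁ : ℝ) * (t + Real.pi) - α * Real.pi
          = (m₁ * t - α * Real.pi) + m₁ * Real.pi from by ring,
        Real.cos_add_nat_mul_pi, Real.cos_add_nat_mul_pi, Real.sin_add_nat_mul_pi]
    have hsign : ((-1 : ℝ)) ^ m₂ * (-1 : ℝ) ^ m₁ = 1 := by
      rw [← pow_add]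
      exact Even.neg_one_pow (by rwa [add_comm] at hpar)
    refine Prod.ext ?_ ?_
    · linear_combination (Real.cos ((m₂:ℝ) * t) * Real.cos ((m₁:ℝ) * t - α * Real.pi)) * hsign
    · linear_combination (Real.cos ((m₂:ℝ) * t) * Real.sin ((m₁:ℝ) * t - α * Real.pi)) * hsign

private lemma aux_construct (m₁ m₂ g : ℕ) (hm₁ : 0 < m₁) (hm₂ : 0 < m₂)
    (hg : g = Nat.gcd m₁ m₂)
    (θ φ : ℝ) (k : ℤ) (ε : ℝ) (hε : ε = 1 ∨ ε = -1)
    (h : (m₂ : ℝ) * θ = k * Real.pi + ε * ((m₁ : ℝ) * φ)) :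
    ∃ ρ : ℕ, ρ < 2 * g ∧ ∃ t : ℝ,
      Real.cos ((m₂ : ℝ) * t) = Real.cos φ ∧
      ∃ b : ℤ, (m₁ : ℝ) * t - (ρ : ℝ) / (m₂ : ℝ) * Real.pi = θ + b * (2 * Real.pi) := by
  have hg0 : 0 < g := hg ▸ Nat.gcd_pos_of_pos_left _ hm₁
  have hn0 : (0 : ℤ) < 2 * (g : ℤ) := by positivity
  set ρz : ℤ := (-k) % (2 * (g : ℤ)) with hρz
  set q : ℤ := (-k) / (2 * (g : ℤ)) with hqd
  have hq : 2 * (g : ℤ) * q + ρz = -k := Int.mul_ediv_add_emod (-k) (2 * (g : ℤ))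
  have hρz0 : 0 ≤ ρz := Int.emod_nonneg _ (ne_of_gt hn0)
  have hρzlt : ρz < 2 * (g : ℤ) := Int.emod_lt_of_pos _ hn0
  set u : ℤ := Nat.gcdA m₁ m₂ with hu
  set v : ℤ := Nat.gcdB m₁ m₂ with hv
  have hbez : (g : ℤ) = m₁ * u + m₂ * v := by rw [hg]; exact Nat.gcd_eq_gcd_ab m₁ m₂
  set a : ℤ := -(u * q) with ha
  set b : ℤ := v * q with hb
  have hint : -k + 2 * a * m₁ - ρz = 2 * b * m₂ := by
    linear_combination -hq + 2 * q * hbez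
  refine ⟨ρz.toNat, ?_, (ε * φ + (a : ℝ) * (2 * Real.pi)) / m₂, ?_, b, ?_⟩
  · omega
  · have hm₂R : (m₂ : ℝ) ≠ 0 := Nat.cast_ne_zero.mpr hm₂.ne'
    rw [show (m₂ : ℝ) * ((ε * φ + (a : ℝ) * (2 * Real.pi)) / m₂)
        = ε * φ + (a : ℝ) * (2 * Real.pi) from by field_simp,
      Real.cos_add_int_mul_two_pi]
    rcases hε with h1 | h1 <;> rw [h1]
    · rw [one_mul]
    · rw [neg_one_mul, Real.cos_neg]
  · have hm₂R : (m₂ : ℝ) ≠ 0 := Nat.cast_ne_zero.mpr hm₂.ne'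
    have hcast : ((ρz.toNat : ℕ) : ℝ) = (ρz : ℝ) := by
      have h5 := Int.toNat_of_nonneg hρz0
      exact_mod_cast congrArg (fun z : ℤ => (z : ℝ)) h5
    have hε2 : ε * ε = 1 := by rcases hε with h1 | h1 <;> rw [h1] <;> ring
    have hintR : (-k : ℝ) + 2 * (a : ℝ) * m₁ - (ρz : ℝ) = 2 * (b : ℝ) * m₂ := by
      exact_mod_cast hint
    rw [hcast]
    have key : (m₂ : ℝ) * ((m₁ : ℝ) * ((ε * φ + (a : ℝ) * (2 * Real.pi)) / m₂)
        - (ρz : ℝ) / m₂ * Real.pi) = (m₂ : ℝ) * (θ + b * (2 * Real.pi)) := by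
      field_simp
      linear_combination -h + Real.pi * hintR
    exact mul_left_cancel₀ hm₂R key

end AuxRhodonea

/-- Theorem 4.1 a): the rhodonea variety decomposes as the union of the `2g`
rotated rhodonea curves over one period. -/
theorem rhodonea_variety_decomposition (m₁ m₂ : ℕ) (hm₁ : 0 < m₁) (hm₂ : 0 < m₂)
    (g : ℕ) (hg : g = Nat.gcd m₁ m₂) (P : ℝ)
    (hP : P = if Odd (m₁ / g + m₂ / g) then 2 * Real.pi else Real.pi) :
    {x : ℝ × ℝ | ∃ r θ : ℝ, 0 ≤ r ∧ r ≤ 1 ∧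
        x = (r * Real.cos θ, r * Real.sin θ) ∧
        chebT m₁ r ^ 2 = Real.cos (m₂ * θ) ^ 2} =
      ⋃ ρ ∈ Finset.range (2 * g),
        rho m₁ m₂ ((ρ : ℝ) / m₂) '' Set.Ico (0 : ℝ) P := by
  have hg0 : 0 < g := hg ▸ Nat.gcd_pos_of_pos_left _ hm₁
  have hPor : P = 2 * Real.pi ∨ (P = Real.pi ∧ Even (m₁ + m₂)) := by
    by_cases hodd : Odd (m₁ / g + m₂ / g)
    · left; rw [hP, if_pos hodd]
    · right
      refine ⟨by rw [hP, if_neg hodd], ?_⟩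
      have h1 : g ∣ m₁ := hg ▸ Nat.gcd_dvd_left _ _
      have h2 : g ∣ m₂ := hg ▸ Nat.gcd_dvd_right _ _
      have e : Even (m₁ / g + m₂ / g) := Nat.not_odd_iff_even.mp hodd
      have h3 : m₁ + m₂ = g * (m₁ / g + m₂ / g) := by
        rw [Nat.mul_add, Nat.mul_div_cancel' h1, Nat.mul_div_cancel' h2]
      rw [h3]; exact e.mul_left g
  have hP0 : 0 < P := by
    rcases hPor with h | ⟨h, _⟩ <;> · rw [h]; positivity
  have hper : ∀ α : ℝ, Function.Periodic (rho m₁ m₂ α) P :=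
    fun α => aux_rho_periodic m₁ m₂ α P hPor
  have hm₂R : (m₂ : ℝ) ≠ 0 := Nat.cast_ne_zero.mpr hm₂.ne'
  ext x
  simp only [Set.mem_setOf_eq, Set.mem_iUnion, Set.mem_image, Finset.mem_range,
    Set.mem_Ico]
  constructor
  · rintro ⟨r, θ, hr0, hr1, hx, hcheb⟩
    unfold chebT at hcheb
    set φ := Real.arccos r with hφ
    have hrφ : Real.cos φ = r := Real.cos_arccos (by linarith) hr1
    have hcc : Real.cos (2 * ((m₂:ℝ) * θ)) = Real.cos (2 * ((m₁:ℝ) * φ)) := by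
      rw [Real.cos_two_mul, Real.cos_two_mul]
      linarith [hcheb]
    have hctor : ∃ ρ : ℕ, ρ < 2 * g ∧ ∃ t : ℝ,
        Real.cos ((m₂ : ℝ) * t) = Real.cos φ ∧
        ∃ b : ℤ, (m₁ : ℝ) * t - (ρ : ℝ) / (m₂ : ℝ) * Real.pi = θ + b * (2 * Real.pi) := by
      obtain ⟨k, hk | hk⟩ := Real.cos_eq_cos_iff.mp hcc
      · exact aux_construct m₁ m₂ g hm₁ hm₂ hg θ φ (-k) 1 (Or.inl rfl)
          (by push_cast; linarith)
      · exact aux_construct m₁ m₂ g hm₁ hm₂ hg θ φ k (-1) (Or.inr rfl)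
          (by push_cast; linarith)
    obtain ⟨ρ, hρlt, t, htc, b, htθ⟩ := hctor
    refine ⟨ρ, hρlt, t - ⌊t / P⌋ * P, ⟨?_, ?_⟩, ?_⟩
    · rw [sub_nonneg]
      calc (⌊t / P⌋ : ℝ) * P ≤ (t / P) * P :=
            mul_le_mul_of_nonneg_right (Int.floor_le _) hP0.le
        _ = t := div_mul_cancel₀ t hP0.ne'
    · have h1 : t / P < ⌊t / P⌋ + 1 := Int.lt_floor_add_one _
      have h2 : t < ((⌊t / P⌋ : ℝ) + 1) * P := by
        calc t = (t / P) * P := (div_mul_cancel₀ t hP0.ne').symm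
          _ < ((⌊t / P⌋ : ℝ) + 1) * P := mul_lt_mul_of_pos_right h1 hP0
      linarith
    · rw [(hper _).sub_int_mul_eq, hx]
      unfold rho
      rw [htc, hrφ, htθ, Real.cos_add_int_mul_two_pi, Real.sin_add_int_mul_two_pi]
  · rintro ⟨ρ, hρlt, t, ⟨ht0, htP⟩, hxt⟩
    by_cases hc : 0 ≤ Real.cos ((m₂:ℝ) * t)
    · refine ⟨Real.cos ((m₂:ℝ) * t), (m₁:ℝ) * t - (ρ:ℝ) / (m₂:ℝ) * Real.pi, hc,
        Real.cos_le_one _, ?_, ?_⟩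
      · rw [← hxt]; rfl
      · unfold chebT
        rw [aux_cheb_cos]
        have e : (m₂:ℝ) * ((m₁:ℝ) * t - (ρ:ℝ) / (m₂:ℝ) * Real.pi)
            = (m₁:ℝ) * ((m₂:ℝ) * t) + ((-(ρ:ℤ) : ℤ) : ℝ) * Real.pi := by
          push_cast
          field_simp
          ring
        rw [e, aux_cos_sq_add_int_mul_pi]
    · push_neg at hc
      refine ⟨-Real.cos ((m₂:ℝ) * t),
        ((m₁:ℝ) * t - (ρ:ℝ) / (m₂:ℝ) * Real.pi) + Real.pi,
        by linarith, by linarith [Real.neg_one_le_cos ((m₂:ℝ) * t)], ?_, ?_⟩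
      · rw [← hxt]
        unfold rho
        rw [Real.cos_add_pi, Real.sin_add_pi]
        refine Prod.ext ?_ ?_ <;> dsimp <;> ring
      · unfold chebT
        rw [show -Real.cos ((m₂:ℝ) * t) = Real.cos ((m₂:ℝ) * t + Real.pi) from
          (Real.cos_add_pi _).symm, aux_cheb_cos]
        have e1 : (m₁:ℝ) * ((m₂:ℝ) * t + Real.pi)
            = (m₁:ℝ) * ((m₂:ℝ) * t) + ((m₁:ℤ) : ℝ) * Real.pi := by push_cast; ring
        have e2 : (m₂:ℝ) * (((m₁:ℝ) * t - (ρ:ℝ) / (m₂:ℝ) * Real.pi) + Real.pi)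
            = (m₁:ℝ) * ((m₂:ℝ) * t) + (((m₂:ℤ) - (ρ:ℤ) : ℤ) : ℝ) * Real.pi := by
          push_cast
          field_simp
          ring
        rw [e1, e2, aux_cos_sq_add_int_mul_pi, aux_cos_sq_add_int_mul_pi]
end

section
/- Let m = (m₁,m₂) ∈ ℕ². The rhodonea nodes can be written as LS^{(m)} = {x(r,θ) ∈ 𝔻 : T_{m₁}(r)² = cos²(m₂θ) ∈ {0,1}} (in polar coordinates x(r,θ) = (r cos θ, r sin θ), r ∈ [0,1]); that is, LS^{(m)} consists exactly of those points of the rhodonea variety 𝓡^{(m)} = {x(r,θ) ∈ 𝔻 : T_{m₁}(r)² = cos²(m₂θ)} at which T_{m₁}(r)² and cos²(m₂θ) attain the extreme values 0 or 1. -/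
/-!
Writing `t = arccos r ∈ [0, π/2]`, we have `T_{m₁}(r) = cos (m₁ t)`, and `cos² a ∈ {0, 1}` exactly
when `a ∈ (π/2)ℤ`. Hence the extremal points are the `x(r, θ)` with `r = cos (kπ/(2m₁))`,
`0 ≤ k ≤ m₁`, and `θ = jπ/(2m₂)`; the condition `T_{m₁}(r)² = cos² (m₂θ)` says `k ≡ j (mod 2)`.
Reducing `j` modulo `4m₂` into `(-2m₂, 2m₂]` yields a node, except for `k = m₁`, where the point
is the origin, i.e. the node `(m₁, -(m₁ mod 2))`.
-/

open Real

lemma cos_sq_int_mul_pi_div_two (k : ℤ) :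
    cos (k * π / 2) ^ 2 = if Even k then 1 else 0 := by
  rw [cos_sq, show 2 * ((k : ℝ) * π / 2) = k * π by ring, cos_int_mul_pi]
  split_ifs with hk
  · rw [hk.neg_one_zpow]; norm_num
  · rw [(Int.not_even_iff_odd.mp hk).neg_one_zpow]; norm_num

lemma cos_sq_eq_zero_or_one_iff {a : ℝ} :
    cos a ^ 2 = 0 ∨ cos a ^ 2 = 1 ↔ ∃ k : ℤ, a = k * π / 2 := by
  constructor
  · rintro (h | h)
    · obtain ⟨k, hk⟩ := cos_eq_zero_iff.mp (pow_eq_zero_iff two_ne_zero |>.mp h)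
      exact ⟨2 * k + 1, by rw [hk]; push_cast; ring⟩
    · have hsin : sin a = 0 := by nlinarith [sin_sq_add_cos_sq a, sq_nonneg (sin a)]
      obtain ⟨n, hn⟩ := sin_eq_zero_iff.mp hsin
      exact ⟨2 * n, by rw [← hn]; push_cast; ring⟩
  · rintro ⟨k, rfl⟩
    rw [cos_sq_int_mul_pi_div_two]
    split_ifs <;> simp

lemma chebT_cos (n : ℕ) {t : ℝ} (h₀ : 0 ≤ t) (h₁ : t ≤ π) : chebT n (cos t) = cos (n * t) := by
  rw [chebT, arccos_cos h₀ h₁]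

section Nodes

variable {m₁ m₂ : ℕ}

lemma natCast_mul_thetaI (hm₂ : m₂ ≠ 0) (j : ℤ) : (m₂ : ℝ) * thetaI m₂ j = j * π / 2 := by
  unfold thetaI; field_simp

lemma thetaI_add_mul (hm₂ : m₂ ≠ 0) (j q : ℤ) :
    thetaI m₂ (j + 4 * m₂ * q) = thetaI m₂ j + q * (2 * π) := by
  unfold thetaI; push_cast; field_simp; ring

lemma rI_self (hm₁ : m₁ ≠ 0) : rI m₁ m₁ = 0 := by
  rw [rI, show ((m₁ : ℤ) : ℝ) * π / (2 * m₁) = π / 2 by push_cast; field_simp, cos_pi_div_two]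

lemma rI_nonneg (hm₁ : m₁ ≠ 0) {k : ℤ} (h₀ : 0 ≤ k) (h₁ : k ≤ m₁) : 0 ≤ rI m₁ k := by
  have hm : (0 : ℝ) < m₁ := by positivity
  have hk₀ : (0 : ℝ) ≤ k := by exact_mod_cast h₀
  have hk₁ : (k : ℝ) ≤ m₁ := by exact_mod_cast h₁
  refine cos_nonneg_of_mem_Icc ⟨by linarith [pi_pos, show 0 ≤ k * π / (2 * m₁) by positivity], ?_⟩
  rw [div_le_iff₀ (by positivity)]; nlinarith [pi_pos]

lemma chebT_rI_sq (hm₁ : m₁ ≠ 0) {k : ℤ} (h₀ : 0 ≤ k) (h₁ : k ≤ 2 * m₁) :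
    chebT m₁ (rI m₁ k) ^ 2 = if Even k then 1 else 0 := by
  have hm : (0 : ℝ) < m₁ := by positivity
  have hk₀ : (0 : ℝ) ≤ k := by exact_mod_cast h₀
  have hk₁ : (k : ℝ) ≤ 2 * m₁ := by exact_mod_cast h₁
  rw [rI, chebT_cos _ (by positivity), ← cos_sq_int_mul_pi_div_two]
  · congr 2; field_simp
  · rw [div_le_iff₀ (by positivity)]; nlinarith [pi_pos]

lemma exists_rI_eq_of_chebT_sq (hm₁ : m₁ ≠ 0) {r : ℝ} (hr₀ : 0 ≤ r) (hr₁ : r ≤ 1)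
    (h : chebT m₁ r ^ 2 = 0 ∨ chebT m₁ r ^ 2 = 1) :
    ∃ k : ℤ, 0 ≤ k ∧ k ≤ m₁ ∧ r = rI m₁ k := by
  have hm : (0 : ℝ) < m₁ := by positivity
  obtain ⟨k, hk⟩ := cos_sq_eq_zero_or_one_iff.mp h
  have harc : arccos r = k * π / (2 * m₁) := by rw [eq_div_iff (by positivity)]; linarith
  have hk₀ : (0 : ℝ) ≤ k := by nlinarith [arccos_nonneg r, pi_pos]
  have hk₁ : (k : ℝ) ≤ m₁ := by nlinarith [arccos_le_pi_div_two.mpr hr₀, pi_pos]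
  refine ⟨k, by exact_mod_cast hk₀, by exact_mod_cast hk₁, ?_⟩
  rw [rI, ← harc, cos_arccos (by linarith) hr₁]

lemma exists_index_of_extremal (hm₁ : m₁ ≠ 0) (hm₂ : m₂ ≠ 0) {r θ : ℝ} (hr₀ : 0 ≤ r)
    (hr₁ : r ≤ 1) (heq : chebT m₁ r ^ 2 = cos (m₂ * θ) ^ 2)
    (hext : chebT m₁ r ^ 2 = 0 ∨ chebT m₁ r ^ 2 = 1) :
    ∃ k j : ℤ, 0 ≤ k ∧ k ≤ m₁ ∧ Even (k + j) ∧ r = rI m₁ k ∧ θ = thetaI m₂ j := by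
  obtain ⟨k, hk₀, hk₁, rfl⟩ := exists_rI_eq_of_chebT_sq hm₁ hr₀ hr₁ hext
  obtain ⟨j, hj⟩ := cos_sq_eq_zero_or_one_iff.mp (heq ▸ hext)
  have hθ : θ = thetaI m₂ j :=
    mul_left_cancel₀ (Nat.cast_ne_zero.mpr hm₂) (hj.trans (natCast_mul_thetaI hm₂ j).symm)
  refine ⟨k, j, hk₀, hk₁, ?_, rfl, hθ⟩
  rw [chebT_rI_sq hm₁ hk₀ (by omega), hj, cos_sq_int_mul_pi_div_two] at heq
  rw [Int.even_add]
  by_cases hke : Even k <;> by_cases hje : Even j <;> simp [hke, hje] at heq ⊢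

lemma node_mem_LS (hm₁ : m₁ ≠ 0) (hm₂ : m₂ ≠ 0) {k j : ℤ} (hk₀ : 0 ≤ k) (hk₁ : k ≤ m₁)
    (hkj : Even (k + j)) : node m₁ m₂ (k, j) ∈ LS m₁ m₂ := by
  rcases hk₁.lt_or_eq with hk | rfl
  · have hp : (0 : ℤ) < 4 * m₂ := by omega
    obtain ⟨hi₀, hi₁⟩ := toIocMod_mem_Ioc hp (-(2 * m₂)) j
    set i₂ := toIocMod hp (-(2 * m₂)) j
    set q := toIocDiv hp (-(2 * m₂)) j
    have hj : j = i₂ + 4 * m₂ * q := by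
      have := toIocMod_add_toIocDiv_zsmul hp (-(2 * m₂)) j
      rw [smul_eq_mul] at this
      linarith
    refine ⟨(k, i₂), ⟨hk₀, hk₁, hi₀, by omega, fun h => absurd h hk.ne, ?_⟩, ?_⟩
    · rw [show k + j = (k + i₂) + 2 * (2 * m₂ * q) by rw [hj]; ring] at hkj
      exact (Int.even_add.mp hkj).mpr (even_two_mul _)
    · conv_rhs => rw [hj]
      simp only [node, thetaI_add_mul hm₂, cos_add_int_mul_two_pi, sin_add_int_mul_two_pi]
  · refine ⟨(m₁, -(m₁ % 2)), ⟨hk₀, le_rfl, by omega, by omega, fun _ => by omega, ?_⟩, ?_⟩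
    · rw [Int.even_iff] at hkj ⊢; omega
    · simp [node, rI_self hm₁]

end Nodes

/-- Theorem 4.1 b): the rhodonea nodes are the points of the rhodonea variety at
which `T_{m₁}(r)²` and `cos²(m₂θ)` attain the extreme values `0` or `1`. -/
theorem rhodonea_nodes_eq_extremal_points (m₁ m₂ : ℕ) (hm₁ : 0 < m₁) (hm₂ : 0 < m₂) :
    LS m₁ m₂ = {x : ℝ × ℝ | ∃ r θ : ℝ, 0 ≤ r ∧ r ≤ 1 ∧
      x = (r * Real.cos θ, r * Real.sin θ) ∧
      chebT m₁ r ^ 2 = Real.cos (m₂ * θ) ^ 2 ∧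
      (chebT m₁ r ^ 2 = 0 ∨ chebT m₁ r ^ 2 = 1)} := by
  ext x
  constructor
  · rintro ⟨⟨k, j⟩, ⟨hk₀, hk₁, -, -, -, hkj⟩, rfl⟩
    dsimp only at hk₀ hk₁ hkj
    have hr := chebT_rI_sq hm₁.ne' hk₀ (by omega)
    have hθ : cos (m₂ * thetaI m₂ j) ^ 2 = if Even j then 1 else 0 := by
      rw [natCast_mul_thetaI hm₂.ne', cos_sq_int_mul_pi_div_two]
    refine ⟨rI m₁ k, thetaI m₂ j, rI_nonneg hm₁.ne' hk₀ hk₁, cos_le_one _, rfl, ?_, ?_⟩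
    · rw [hr, hθ]; exact if_congr (Int.even_add.mp hkj) rfl rfl
    · rw [hr]; split_ifs <;> simp
  · rintro ⟨r, θ, hr₀, hr₁, rfl, heq, hext⟩
    obtain ⟨k, j, hk₀, hk₁, hkj, rfl, rfl⟩ :=
      exists_index_of_extremal hm₁.ne' hm₂.ne' hr₀ hr₁ heq hext
    exact node_mem_LS hm₁.ne' hm₂.ne' hk₀ hk₁ hkj
end

section
/- Let m = (m₁,m₂) ∈ ℕ² and γ ∈ ℤ² with γ₁ ≡ γ₂ (mod 2). If the discrete integral ∫χ^{(m)}_γ dw = Σ_{i ∈ I^{(m)}} w^{(m)}_i χ^{(m)}_γ(i) is nonzero, then there exist h₁,h₂ ∈ ℤ with γ₁ = 2h₁m₁, γ₂ = 2h₂m₂ and h₁ + h₂ even. Conversely, if such h₁,h₂ exist, then Σ_{i ∈ I^{(m)}} w^{(m)}_i χ^{(m)}_γ(i) = 1. -/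
/-!
With `ω_m = unitRoot m = exp (π i / (2m))`, `η = ω_{m₁} ^ γ₁` and `ζ = ω_{m₂} ^ γ₂` we have
`χ_γ(i) = (η ^ i₁ + η ^ (-i₁)) / 2 * ζ ^ i₂`, and the parity condition says
`η ^ (2m₁) = ζ ^ (2m₂) = ±1`. The row `i₁ = a` of `I^{(m)}` consists of the `i₂` of the parity
of `a` in a full period of `ζ`. The last row `i₁ = m₁` only has half a period, which is harmless:
either `ζ ^ (2m₂) = 1`, so half a period is a period, or `η ^ (2m₁) = -1` and the cosine factor
vanishes on that row. So every row sum is a multiple of `ζ ^ a` if `ζ ^ 2 = 1` and is `0`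
otherwise. What remains is a trapezoidal sum of `u ^ a + u ^ (-a)`, `0 ≤ a ≤ m₁`, for `u = η ζ`
with `u ^ (2m₁) = 1`: a full geometric sum over a period, hence `4m₁` if `u = 1` and `0`
otherwise. Finally `ζ ^ 2 = 1 ∧ η ζ = 1` is the arithmetic condition on `γ` because `ω_m` is a
primitive `4m`-th root of unity.
-/

open Finset

section RootOfUnitySums

variable {K : Type*} [Field K] [DecidableEq K]

theorem sum_Ioc_zpow_of_pow_eq_one {z : K} {n : ℕ} (hz : z ^ n = 1) (c : ℤ) :
    ∑ b ∈ Ioc c (c + n), z ^ b = if z = 1 then (n : K) else 0 := by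
  rcases Nat.eq_zero_or_pos n with rfl | hn
  · simp
  have hz0 : z ≠ 0 := by rintro rfl; simp [hn.ne'] at hz
  rw [Int.Ioc_eq_finset_map, sum_map, add_sub_cancel_left, Int.toNat_natCast]
  simp only [Function.Embedding.trans_apply, Nat.castEmbedding_apply, addLeftEmbedding_apply,
    zpow_add₀ hz0, zpow_natCast, ← mul_sum]
  split_ifs with h1
  · simp [h1]
  · rw [geom_sum_eq h1, hz, sub_self, zero_div, mul_zero]

theorem sum_Ioc_filter_even_add_zpow [NeZero (2 : K)] {z : K} {n : ℕ} (hz : z ^ (2 * n) = 1)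
    (a c : ℤ) :
    ∑ b ∈ Ioc c (c + 2 * n) with Even (a + b), z ^ b = if z ^ 2 = 1 then n * z ^ a else 0 := by
  have indicator (k : ℤ) : (if Even k then (1 : K) else 0) = (1 + (-1) ^ k) / 2 := by
    rcases Int.even_or_odd k with hk | hk
    · simp [hk, hk.neg_one_zpow]
    · simp [hk.neg_one_zpow, Int.not_even_iff_odd.mpr hk]
  have hnz : (-z) ^ (2 * n) = 1 := by rw [pow_mul, neg_sq, ← pow_mul, hz]
  have split : ∑ b ∈ Ioc c (c + 2 * n) with Even (a + b), z ^ b =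
      (∑ b ∈ Ioc c (c + (2 * n : ℕ)), z ^ b +
        (-1) ^ a * ∑ b ∈ Ioc c (c + (2 * n : ℕ)), (-z) ^ b) / 2 := by
    rw [sum_filter, mul_sum, ← sum_add_distrib, sum_div]
    push_cast
    refine sum_congr rfl fun b _ => ?_
    rw [← boole_mul, indicator, neg_eq_neg_one_mul z, mul_zpow,
      zpow_add₀ (neg_ne_zero.mpr one_ne_zero)]
    ring
  rw [split, sum_Ioc_zpow_of_pow_eq_one hz, sum_Ioc_zpow_of_pow_eq_one hnz,
    div_eq_iff two_ne_zero]
  have hne : (-1 : K) ≠ 1 := fun h => two_ne_zero (α := K) (by linear_combination -h)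
  by_cases h1 : z = 1
  · simp [h1, hne, mul_comm]
  by_cases h2 : z = -1
  · simp [h2, hne, mul_comm, mul_assoc, mul_left_comm]
  · simp [h1, h2, neg_eq_iff_eq_neg]

theorem sum_Icc_trapezoid {R : Type*} [Semiring R] (f : ℤ → R) {m : ℕ} (hm : 0 < m) :
    ∑ a ∈ Icc (0 : ℤ) m, (if a = 0 ∨ a = m then 1 else 2) * f a =
      ∑ k ∈ range m, (f k + f (k + 1)) := by
  obtain ⟨n, rfl⟩ := Nat.exists_eq_succ_of_ne_zero hm.ne'
  have hIcc : Icc (0 : ℤ) (n + 1 : ℕ) = (range (n + 2)).map Nat.castEmbedding := by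
    ext a
    simp only [mem_Icc, mem_map, mem_range, Nat.castEmbedding_apply]
    constructor
    · intro h; exact ⟨a.toNat, by omega, by omega⟩
    · rintro ⟨k, hk, rfl⟩; omega
  rw [Nat.succ_eq_add_one, hIcc, sum_map, sum_add_distrib, sum_range_succ _ (n + 1),
    sum_range_succ' _ n, sum_range_succ' (fun k : ℕ => f k) n, sum_range_succ _ n]
  simp only [Nat.castEmbedding_apply]
  have hinner : ∀ k ∈ range n, (if ((k + 1 : ℕ) : ℤ) = 0 ∨ ((k + 1 : ℕ) : ℤ) = ((n + 1 : ℕ) : ℤ)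
      then (1 : R) else 2) * f ((k + 1 : ℕ) : ℤ) = f ((k + 1 : ℕ) : ℤ) + f ((k : ℤ) + 1) := by
    intro k hk
    rw [mem_range] at hk
    rw [if_neg (by omega), two_mul, Nat.cast_succ]
  rw [sum_congr rfl hinner, sum_add_distrib]
  simp only [Nat.cast_zero, true_or, or_true, if_true, one_mul, Nat.cast_succ]
  abel

theorem sum_Icc_trapezoid_zpow_add_zpow_neg {u : K} {m : ℕ} (hm : 0 < m)
    (hu : u ^ (2 * m) = 1) :
    ∑ a ∈ Icc (0 : ℤ) m, (if a = 0 ∨ a = m then 1 else 2) * (u ^ a + u ^ (-a)) =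
      if u = 1 then 4 * (m : K) else 0 := by
  have hu0 : u ≠ 0 := by rintro rfl; simp [hm.ne'] at hu
  rw [sum_Icc_trapezoid _ hm]
  simp only [zpow_neg, zpow_natCast, zpow_add_one₀ hu0, mul_inv, ← inv_pow]
  split_ifs with h1
  · subst h1
    norm_num [mul_comm]
  have hG := geom_sum_mul u m
  have hG' := geom_sum_mul u⁻¹ m
  have huinv : u⁻¹ * u = 1 := inv_mul_cancel₀ hu0
  have hsplit : ∀ x ∈ range m, u ^ x + u⁻¹ ^ x + (u ^ x * u + u⁻¹ ^ x * u⁻¹) =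
      (1 + u) * u ^ x + (1 + u⁻¹) * u⁻¹ ^ x := fun _ _ => by ring
  rw [sum_congr rfl hsplit, sum_add_distrib, ← mul_sum, ← mul_sum]
  have hinv : u⁻¹ ^ m = u ^ m := by
    rw [inv_pow, inv_eq_of_mul_eq_one_right (by rw [← pow_add, ← two_mul, hu])]
  rw [hinv] at hG'
  apply mul_right_cancel₀ (sub_ne_zero.mpr h1)
  linear_combination (1 + u) * hG - u * (1 + u⁻¹) * hG' +
    ((1 + u⁻¹) * ∑ i ∈ range m, u⁻¹ ^ i - (u ^ m - 1)) * huinv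

end RootOfUnitySums

/-- The row `i₁ = a` of `I^{(m)}` is the set of `i₂ ≡ a (mod 2)` in a window of
`2 * rowSize m₁ m₂ a` consecutive integers. -/
def rowSize (m₁ m₂ : ℕ) (a : ℤ) : ℕ := if a = m₁ then m₂ else 2 * m₂

theorem sum_IdxF_eq_sum_rows {M : Type*} [AddCommMonoid M] (m₁ m₂ : ℕ) (f : ℤ × ℤ → M) :
    ∑ i ∈ IdxF m₁ m₂, f i = ∑ a ∈ Icc (0 : ℤ) m₁,
      ∑ b ∈ Ioc (-(2 * m₂ : ℤ)) (-(2 * m₂) + 2 * rowSize m₁ m₂ a) with Even (a + b),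
        f (a, b) := by
  refine sum_finset_product _ _ _ fun ⟨a, b⟩ => ?_
  simp only [IdxF, rowSize, mem_filter, mem_product, mem_Icc, mem_Ioc, Int.even_iff]
  split_ifs <;> omega

section NodalSums

variable {K : Type*} [Field K] [DecidableEq K] [CharZero K] {m₁ m₂ : ℕ} {η ζ : K}

theorem zpow_add_zpow_neg_mul_sum_row (hm₁ : 0 < m₁) (hη : η ^ (2 * m₁) = ζ ^ (2 * m₂))
    (hζ : ζ ^ (4 * m₂) = 1) (a : ℤ) :
    (η ^ a + η ^ (-a)) *
        ∑ b ∈ Ioc (-(2 * m₂ : ℤ)) (-(2 * m₂) + 2 * rowSize m₁ m₂ a) with Even (a + b), ζ ^ b =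
      (η ^ a + η ^ (-a)) * if ζ ^ 2 = 1 then rowSize m₁ m₂ a * ζ ^ a else 0 := by
  by_cases hlast : a = m₁ ∧ ζ ^ (2 * m₂) ≠ 1
  · have hs : ζ ^ (2 * m₂) = -1 := by
      refine (sq_eq_one_iff.mp ?_).resolve_left hlast.2
      rw [← pow_mul, mul_right_comm, show 2 * 2 = 4 from rfl, hζ]
    have hη0 : η ≠ 0 := by rintro rfl; simp [hm₁.ne', hs] at hη
    have hcos : η ^ (m₁ : ℤ) + η ^ (-(m₁ : ℤ)) = 0 := by
      calc η ^ (m₁ : ℤ) + η ^ (-(m₁ : ℤ)) = η ^ (-(m₁ : ℤ)) * (η ^ (2 * m₁) + 1) := by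
            rw [mul_add, mul_one, ← zpow_natCast, ← zpow_add₀ hη0]
            push_cast
            ring_nf
        _ = 0 := by rw [hη, hs, neg_add_cancel, mul_zero]
    rw [hlast.1, hcos, zero_mul, zero_mul]
  have hrow : ζ ^ (2 * rowSize m₁ m₂ a) = 1 := by
    unfold rowSize
    split_ifs with ha
    · exact not_and_not_right.mp hlast ha
    · rw [← mul_assoc, show 2 * 2 = 4 from rfl, hζ]
  rw [sum_Ioc_filter_even_add_zpow hrow]

theorem sum_IdxF_mul_zpow_eq_ite (hm₁ : 0 < m₁) (hm₂ : 0 < m₂)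
    (hη : η ^ (2 * m₁) = ζ ^ (2 * m₂)) (hζ : ζ ^ (4 * m₂) = 1) :
    ∑ i ∈ IdxF m₁ m₂, (if i.1 = 0 then 1 else 2) / (4 * m₁ * m₂) *
        ((η ^ i.1 + η ^ (-i.1)) / 2 * ζ ^ i.2) =
      if ζ ^ 2 = 1 ∧ η * ζ = 1 then 1 else 0 := by
  rw [sum_IdxF_eq_sum_rows]
  have hfactor (a : ℤ) (s : Finset ℤ) :
      ∑ b ∈ s, (if a = 0 then 1 else 2) / (4 * m₁ * m₂) * ((η ^ a + η ^ (-a)) / 2 * ζ ^ b) =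
        (if a = 0 then 1 else 2) / (4 * m₁ * m₂) / 2 * ((η ^ a + η ^ (-a)) * ∑ b ∈ s, ζ ^ b) := by
    rw [mul_sum, mul_sum]
    exact sum_congr rfl fun _ _ => by ring
  simp only [hfactor, zpow_add_zpow_neg_mul_sum_row hm₁ hη hζ]
  have hm₁K : (m₁ : K) ≠ 0 := Nat.cast_ne_zero.mpr hm₁.ne'
  have hm₂K : (m₂ : K) ≠ 0 := Nat.cast_ne_zero.mpr hm₂.ne'
  by_cases hζ2 : ζ ^ 2 = 1
  swap
  · simp [hζ2]
  have hζinv (a : ℤ) : ζ ^ (-a) = ζ ^ a := by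
    rw [zpow_neg, ← inv_zpow, inv_eq_of_mul_eq_one_left (by rw [← sq, hζ2])]
  have hu : (η * ζ) ^ (2 * m₁) = 1 := by
    rw [mul_pow, hη, pow_mul, pow_mul, hζ2, one_pow, one_pow, one_mul]
  have hterm : ∀ a ∈ Icc (0 : ℤ) m₁, (if a = 0 then 1 else 2) / (4 * m₁ * m₂) / 2 *
      ((η ^ a + η ^ (-a)) * (rowSize m₁ m₂ a * ζ ^ a)) =
        (if a = 0 ∨ a = m₁ then 1 else 2) * ((η * ζ) ^ a + (η * ζ) ^ (-a)) / (4 * m₁) := by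
    intro a ha
    rw [mem_Icc] at ha
    rw [mul_zpow, mul_zpow, hζinv]
    unfold rowSize
    split_ifs <;> first | omega | (push_cast; field_simp)
  simp only [hζ2, if_true, true_and]
  rw [sum_congr rfl hterm, ← sum_div, sum_Icc_trapezoid_zpow_add_zpow_neg hm₁ hu]
  split_ifs
  · field_simp
  · exact zero_div _

end NodalSums

open Complex Real

noncomputable def unitRoot (m : ℕ) : ℂ := exp (π * I / (2 * m))

theorem isPrimitiveRoot_unitRoot {m : ℕ} (hm : m ≠ 0) :
    IsPrimitiveRoot (unitRoot m) (4 * m) := by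
  convert isPrimitiveRoot_exp (4 * m) (by positivity) using 1
  rw [unitRoot]
  congr 1
  push_cast
  field_simp
  ring

theorem unitRoot_pow_two_mul {m : ℕ} (hm : m ≠ 0) : unitRoot m ^ (2 * m) = -1 := by
  rw [unitRoot, ← Complex.exp_nat_mul, ← exp_pi_mul_I]
  congr 1
  push_cast
  field_simp

theorem unitRoot_zpow_two_mul_mul {m : ℕ} (hm : m ≠ 0) (h : ℤ) :
    unitRoot m ^ (2 * h * m) = (-1) ^ h := by
  rw [show 2 * h * m = ((2 * m : ℕ) : ℤ) * h by push_cast; ring, zpow_mul, zpow_natCast,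
    unitRoot_pow_two_mul hm]

theorem zpow_unitRoot_pow_two_mul {m : ℕ} (hm : m ≠ 0) (g : ℤ) :
    (unitRoot m ^ g) ^ (2 * m) = (-1) ^ g := by
  rw [← zpow_natCast, ← zpow_mul, mul_comm, zpow_mul, zpow_natCast, unitRoot_pow_two_mul hm]

theorem zpow_unitRoot_sq_eq_one_and_mul_eq_one_iff {m₁ m₂ : ℕ} (hm₁ : m₁ ≠ 0) (hm₂ : m₂ ≠ 0)
    (g₁ g₂ : ℤ) :
    ((unitRoot m₂ ^ g₂) ^ 2 = 1 ∧ unitRoot m₁ ^ g₁ * unitRoot m₂ ^ g₂ = 1) ↔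
      ∃ h₁ h₂ : ℤ, g₁ = 2 * h₁ * m₁ ∧ g₂ = 2 * h₂ * m₂ ∧ Even (h₁ + h₂) := by
  have hsq : (unitRoot m₂ ^ g₂) ^ 2 = 1 ↔ ∃ h₂ : ℤ, g₂ = 2 * h₂ * m₂ := by
    rw [← zpow_natCast, ← zpow_mul, (isPrimitiveRoot_unitRoot hm₂).zpow_eq_one_iff_dvd]
    push_cast
    constructor
    · rintro ⟨k, hk⟩; exact ⟨k, by linarith⟩
    · rintro ⟨h₂, rfl⟩; exact ⟨h₂, by ring⟩
  constructor
  · rintro ⟨hζ, hprod⟩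
    obtain ⟨h₂, rfl⟩ := hsq.mp hζ
    rw [unitRoot_zpow_two_mul_mul hm₂, ← unitRoot_zpow_two_mul_mul hm₁,
      ← zpow_add₀ ((isPrimitiveRoot_unitRoot hm₁).ne_zero (by omega)),
      (isPrimitiveRoot_unitRoot hm₁).zpow_eq_one_iff_dvd] at hprod
    obtain ⟨k, hk⟩ := hprod
    exact ⟨2 * k - h₂, h₂, by push_cast at hk; linarith, rfl, ⟨k, by ring⟩⟩
  · rintro ⟨h₁, h₂, rfl, rfl, hsum⟩
    refine ⟨hsq.mpr ⟨h₂, rfl⟩, ?_⟩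
    rw [unitRoot_zpow_two_mul_mul hm₁, unitRoot_zpow_two_mul_mul hm₂,
      ← zpow_add₀ (neg_ne_zero.mpr one_ne_zero), hsum.neg_one_zpow]

theorem chi_eq (m₁ m₂ : ℕ) (γ i : ℤ × ℤ) :
    chi m₁ m₂ γ i = ((unitRoot m₁ ^ γ.1) ^ i.1 + (unitRoot m₁ ^ γ.1) ^ (-i.1)) / 2 *
      (unitRoot m₂ ^ γ.2) ^ i.2 := by
  simp only [chi, unitRoot, ← exp_int_mul, ofReal_cos, Complex.cos]
  push_cast
  ring_nf

theorem wgt_eq (m₁ m₂ : ℕ) (i : ℤ × ℤ) :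
    (wgt m₁ m₂ i : ℂ) = (if i.1 = 0 then 1 else 2) / (4 * m₁ * m₂) := by
  unfold wgt; split_ifs <;> push_cast <;> rfl

theorem sum_wgt_mul_chi {m₁ m₂ : ℕ} (hm₁ : 0 < m₁) (hm₂ : 0 < m₂) {γ : ℤ × ℤ}
    (hpar : γ.1 ≡ γ.2 [ZMOD 2]) :
    ∑ i ∈ IdxF m₁ m₂, (wgt m₁ m₂ i : ℂ) * chi m₁ m₂ γ i =
      if (unitRoot m₂ ^ γ.2) ^ 2 = 1 ∧ unitRoot m₁ ^ γ.1 * unitRoot m₂ ^ γ.2 = 1 then 1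
      else 0 := by
  have hη : (unitRoot m₁ ^ γ.1) ^ (2 * m₁) = (unitRoot m₂ ^ γ.2) ^ (2 * m₂) := by
    have heven : Even γ.1 ↔ Even γ.2 := by rw [Int.even_iff, Int.even_iff, hpar.eq]
    rw [zpow_unitRoot_pow_two_mul hm₁.ne', zpow_unitRoot_pow_two_mul hm₂.ne']
    simp only [neg_one_zpow_eq_ite, heven]
  have hζ : (unitRoot m₂ ^ γ.2) ^ (4 * m₂) = 1 := by
    rw [show 4 * m₂ = 2 * m₂ * 2 by ring, pow_mul, zpow_unitRoot_pow_two_mul hm₂.ne',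
      ← zpow_natCast, ← zpow_mul]
    exact Even.neg_one_zpow ⟨γ.2, by push_cast; ring⟩
  simp only [wgt_eq, chi_eq]
  exact sum_IdxF_mul_zpow_eq_ite hm₁ hm₂ hη hζ

/-- Proposition 9.3: the discrete integral `∫ χ^{(m)}_γ dw` is nonzero only if
`γ₁ = 2h₁m₁`, `γ₂ = 2h₂m₂` with `h₁ + h₂` even, in which case it equals `1`. -/
theorem discrete_integral_chi (m₁ m₂ : ℕ) (hm₁ : 0 < m₁) (hm₂ : 0 < m₂)
    (γ : ℤ × ℤ) (hpar : γ.1 ≡ γ.2 [ZMOD 2]) :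
    ((∑ i ∈ IdxF m₁ m₂, (wgt m₁ m₂ i : ℂ) * chi m₁ m₂ γ i) ≠ 0 →
      ∃ h₁ h₂ : ℤ, γ.1 = 2 * h₁ * m₁ ∧ γ.2 = 2 * h₂ * m₂ ∧ Even (h₁ + h₂)) ∧
    ((∃ h₁ h₂ : ℤ, γ.1 = 2 * h₁ * m₁ ∧ γ.2 = 2 * h₂ * m₂ ∧ Even (h₁ + h₂)) →
      (∑ i ∈ IdxF m₁ m₂, (wgt m₁ m₂ i : ℂ) * chi m₁ m₂ γ i) = 1) := by
  rw [sum_wgt_mul_chi hm₁ hm₂ hpar,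
    ← zpow_unitRoot_sq_eq_one_and_mul_eq_one_iff hm₁.ne' hm₂.ne']
  exact ⟨fun h => by_contra fun hc => h (if_neg hc), fun hc => if_pos hc⟩
end
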